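/- arXiv:2409.13608 — 5 statements merged into one kernel-verified Lean document; each statement's English description precedes it below -/
import Mathlib

section
/- Suppose v̂ ∈ ℝ^{m₁} is a solution of the MPAERL model, i.e. a minimizer of f(v) + g(v) over the set {v ∈ ℝ^{m₁} : Dv ≥ d componentwise}. Then for every β > 0 and η > 0 there exists y ∈ ℝ^{m₂} such that the vector z = (v̂; y) ∈ ℝ^{m₁+m₂} is a fixed point of the operator T_{β,η}, i.e. v̂ = prox_{βg}(v̂ − β(∇f(v̂) + Dᵀy)) and y = prox_{η ι_d*}(y + ηDv̂). -/
noncomputable section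

open scoped BigOperators

/-- `ℝ^n` with the Euclidean structure. -/
abbrev Euc (n : ℕ) := EuclideanSpace ℝ (Fin n)

/-- Matrix–vector multiplication, landing in Euclidean space. -/
def mVec {p q : ℕ} (A : Matrix (Fin p) (Fin q) ℝ) (v : Euc q) : Euc p :=
  WithLp.toLp 2 (fun i => ∑ j, A i j * v j)

/-- The set of proximity points of an extended-real-valued function `ψ` at `x`:
`prox_ψ(x) = argmin_u {½‖u−x‖² + ψ(u)}`. -/
def proxSet {n : ℕ} (ψ : Euc n → EReal) (x : Euc n) : Set (Euc n) :=
  {p | ∀ u : Euc n,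
    ((1 / 2 * ‖p - x‖ ^ 2 : ℝ) : EReal) + ψ p ≤ ((1 / 2 * ‖u - x‖ ^ 2 : ℝ) : EReal) + ψ u}

/-- The indicator function `ι_d` of the set `{x | x ≥ d}` (componentwise). -/
def iotaInd {n : ℕ} (d : Euc n) : Euc n → EReal :=
  fun y => if ∀ i, d i ≤ y i then (0 : EReal) else ⊤

/-- The convex (Fenchel) conjugate `ψ*(x) = sup_u {⟨x,u⟩ − ψ(u)}`. -/
def conjFn {n : ℕ} (ψ : Euc n → EReal) : Euc n → EReal :=
  fun x => ⨆ u : Euc n, (((inner ℝ x u : ℝ) : EReal) - ψ u)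

/-!
Because the constraints `Dv ≥ d` are affine, the KKT conditions hold at `v̂` without any
constraint qualification: there is `λ ≥ 0` with `λᵢ ((Dv̂)ᵢ - dᵢ) = 0` and `Dᵀλ ∈ ∂(f + g)(v̂)`.
Otherwise the compact convex set `∂(f + g)(v̂)` misses the cone spanned by the active rows of `D`,
which is closed by Carathéodory's theorem for cones, and a separating direction `w` has
`⟨s, w⟩ < 0` for every subgradient `s` while `v̂ + t w` stays feasible for small `t > 0`. This
contradicts the max formula `(f + g)'(v̂; w) = ⟨s, w⟩` for some subgradient `s`, which comes from
Hahn–Banach applied to the sublinear directional derivative.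

Put `y = -λ`. Since `f` is differentiable, `Dᵀλ - ∇f(v̂) ∈ ∂g(v̂)`, which is the optimality
condition of the first proximal problem. For `y ≤ 0` one has `ι_d*(y) = ⟨y, d⟩`, and
complementary slackness `⟨y, d⟩ = ⟨y, Dv̂⟩` together with `ι_d*(u) ≥ ⟨u, Dv̂⟩` gives the second.
-/

open Set Filter Topology
open scoped RealInnerProductSpace

lemma le_of_hasDerivWithinAt_Ioi {F G : ℝ → ℝ} {F' G' a : ℝ}
    (hF : HasDerivWithinAt F F' (Ioi a) a) (hG : HasDerivWithinAt G G' (Ioi a) a)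
    (ha : F a = G a) (hle : ∀ᶠ t in 𝓝[>] a, F t ≤ G t) : F' ≤ G' := by
  rw [hasDerivWithinAt_iff_tendsto_slope' self_notMem_Ioi] at hF hG
  refine le_of_tendsto_of_tendsto hF hG ?_
  filter_upwards [hle, self_mem_nhdsWithin] with t ht (hat : a < t)
  rw [slope_def_field, slope_def_field, ha]
  exact div_le_div_of_nonneg_right (by linarith) (by linarith)

lemma eventually_le_add_mul_nhdsGT {b c d : ℝ} (hbc : b ≤ c) (hd : b = c → 0 ≤ d) :
    ∀ᶠ t in 𝓝[>] (0 : ℝ), b ≤ c + t * d := by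
  rcases hbc.eq_or_lt with rfl | hbc
  · filter_upwards [self_mem_nhdsWithin] with t (ht : 0 < t)
    nlinarith [hd rfl]
  · have : Tendsto (fun t : ℝ => c + t * d) (𝓝 0) (𝓝 c) :=
      (continuous_const.add (continuous_id.mul continuous_const)).tendsto' 0 c (by simp)
    exact nhdsWithin_le_nhds (this.eventually (eventually_ge_nhds hbc))

section DirDeriv

variable {E : Type*} [AddCommGroup E] [Module ℝ E] {f : E → ℝ}

def dirDeriv (f : E → ℝ) (x u : E) : ℝ :=
  derivWithin (fun t : ℝ => f (x + t • u)) (Ioi 0) 0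

@[simp]
lemma dirDeriv_zero (f : E → ℝ) (x : E) : dirDeriv f x 0 = 0 := by
  simp [dirDeriv]

namespace ConvexOn

lemma comp_line (hf : ConvexOn ℝ univ f) (x u : E) :
    ConvexOn ℝ univ fun t : ℝ => f (x + t • u) := by
  simpa [Function.comp_def] using
    (hf.translate_right x).comp_linearMap (LinearMap.toSpanSingleton ℝ E u)

lemma hasDerivWithinAt_dirDeriv (hf : ConvexOn ℝ univ f) (x u : E) :
    HasDerivWithinAt (fun t : ℝ => f (x + t • u)) (dirDeriv f x u) (Ioi 0) 0 :=
  (hf.comp_line x u).hasDerivWithinAt_rightDeriv_of_mem_interior (by simp)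

lemma dirDeriv_le_sub (hf : ConvexOn ℝ univ f) (x u : E) :
    dirDeriv f x u ≤ f (x + u) - f x := by
  simpa [dirDeriv, slope_def_field] using
    (hf.comp_line x u).rightDeriv_le_slope_of_mem_interior (x := 0) (by simp) (mem_univ 1) one_pos

lemma hasDerivWithinAt_dirDeriv_comp_mul (hf : ConvexOn ℝ univ f) (x u : E) {c : ℝ}
    (hc : 0 < c) :
    HasDerivWithinAt (fun t : ℝ => f (x + (c * t) • u)) (dirDeriv f x u * c) (Ioi 0) 0 := by
  have hmul : HasDerivWithinAt (fun t : ℝ => c * t) c (Ioi 0) 0 := by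
    simpa using (hasDerivWithinAt_id (0 : ℝ) (Ioi 0)).const_mul c
  have hline := hf.hasDerivWithinAt_dirDeriv x u
  rw [← mul_zero c] at hline
  exact hline.comp 0 hmul fun t (ht : 0 < t) => by simpa using mul_pos hc ht

lemma dirDeriv_smul (hf : ConvexOn ℝ univ f) (x u : E) {c : ℝ} (hc : 0 < c) :
    dirDeriv f x (c • u) = c * dirDeriv f x u := by
  rw [mul_comm]
  refine HasDerivWithinAt.derivWithin ?_ (uniqueDiffWithinAt_Ioi 0)
  simpa [smul_smul, mul_comm] using hf.hasDerivWithinAt_dirDeriv_comp_mul x u hc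

lemma dirDeriv_add_le (hf : ConvexOn ℝ univ f) (x u v : E) :
    dirDeriv f x (u + v) ≤ dirDeriv f x u + dirDeriv f x v := by
  have hmidpoint : ∀ t : ℝ,
      f (x + t • (u + v)) ≤ (f (x + (2 * t) • u) + f (x + (2 * t) • v)) / 2 := by
    intro t
    have hcomb : (1 / 2 : ℝ) • (x + (2 * t) • u) + (1 / 2 : ℝ) • (x + (2 * t) • v) =
        x + t • (u + v) := by module
    have := hf.2 (mem_univ (x + (2 * t) • u)) (mem_univ (x + (2 * t) • v))
      (by norm_num : (0 : ℝ) ≤ 1 / 2) (by norm_num : (0 : ℝ) ≤ 1 / 2) (by norm_num)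
    rw [hcomb, smul_eq_mul, smul_eq_mul] at this
    linarith
  have hrhs := ((hf.hasDerivWithinAt_dirDeriv_comp_mul x u two_pos).add
    (hf.hasDerivWithinAt_dirDeriv_comp_mul x v two_pos)).div_const 2
  have := le_of_hasDerivWithinAt_Ioi (hf.hasDerivWithinAt_dirDeriv x (u + v)) hrhs (by simp)
    (Eventually.of_forall hmidpoint)
  linarith

lemma mul_dirDeriv_le (hf : ConvexOn ℝ univ f) (x u : E) (c : ℝ) :
    c * dirDeriv f x u ≤ dirDeriv f x (c • u) := by
  rcases lt_trichotomy c 0 with hc | rfl | hc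
  · have := hf.dirDeriv_add_le x (c • u) ((-c) • u)
    rw [hf.dirDeriv_smul x u (neg_pos.2 hc), ← add_smul, add_neg_cancel, zero_smul,
      dirDeriv_zero] at this
    linarith
  · simp
  · rw [hf.dirDeriv_smul x u hc]

lemma dirDeriv_nonneg (hf : ConvexOn ℝ univ f) (x u : E)
    (hu : ∀ᶠ t in 𝓝[>] (0 : ℝ), f x ≤ f (x + t • u)) : 0 ≤ dirDeriv f x u :=
  le_of_hasDerivWithinAt_Ioi (hasDerivWithinAt_const 0 _ (f x))
    (hf.hasDerivWithinAt_dirDeriv x u) (by simp) hu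

end ConvexOn

end DirDeriv

section Subdifferential

variable {E : Type*} [NormedAddCommGroup E] [InnerProductSpace ℝ E]

def subdifferential (f : E → ℝ) (x : E) : Set E :=
  {s | ∀ y, f x + ⟪s, y - x⟫ ≤ f y}

lemma convex_subdifferential (f : E → ℝ) (x : E) : Convex ℝ (subdifferential f x) := by
  intro s₁ hs₁ s₂ hs₂ a b ha hb hab y
  have h₁ := mul_le_mul_of_nonneg_left (hs₁ y) ha
  have h₂ := mul_le_mul_of_nonneg_left (hs₂ y) hb
  rw [inner_add_left, real_inner_smul_left, real_inner_smul_left]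
  linear_combination h₁ + h₂ + (f y - f x) * hab

lemma isClosed_subdifferential (f : E → ℝ) (x : E) : IsClosed (subdifferential f x) := by
  simp only [subdifferential, ofPred_forall]
  exact isClosed_iInter fun y =>
    isClosed_le (continuous_const.add (continuous_id.inner continuous_const)) continuous_const

lemma isBounded_subdifferential {f : E → ℝ} {x : E} (hf : ContinuousAt f x) :
    Bornology.IsBounded (subdifferential f x) := by
  obtain ⟨δ, hδ, hball⟩ := Metric.continuousAt_iff.1 hf 1 one_pos
  refine isBounded_iff_forall_norm_le.2 ⟨2 / δ, fun s hs => ?_⟩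
  rcases eq_or_ne s 0 with rfl | hs0
  · rw [norm_zero]
    positivity
  have hnorm : 0 < ‖s‖ := norm_pos_iff.2 hs0
  set y := x + (δ / (2 * ‖s‖)) • s
  have hy : dist y x < δ := by
    rw [dist_eq_norm, add_sub_cancel_left, norm_smul, Real.norm_of_nonneg (by positivity)]
    field_simp
    linarith
  have hfy := (abs_lt.1 (hball hy)).2
  have hsy := hs y
  rw [add_sub_cancel_left, real_inner_smul_right, real_inner_self_eq_norm_sq] at hsy
  rw [le_div_iff₀ hδ]
  have : δ / (2 * ‖s‖) * ‖s‖ ^ 2 = δ * ‖s‖ / 2 := by field_simp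
  linarith

lemma isCompact_subdifferential [FiniteDimensional ℝ E] {f : E → ℝ} {x : E}
    (hf : ContinuousAt f x) : IsCompact (subdifferential f x) :=
  Metric.isCompact_of_isClosed_isBounded (isClosed_subdifferential f x)
    (isBounded_subdifferential hf)

lemma smul_mem_subdifferential {f : E → ℝ} {x s : E} {c : ℝ} (hc : 0 ≤ c)
    (hs : s ∈ subdifferential f x) : c • s ∈ subdifferential (fun y => c * f y) x := by
  intro y
  rw [real_inner_smul_left, ← mul_add]
  exact mul_le_mul_of_nonneg_left (hs y) hc

lemma sub_gradient_mem_subdifferential [CompleteSpace E] {f g : E → ℝ} {p s : E}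
    (hf : DifferentiableAt ℝ f p) (hg : ConvexOn ℝ univ g) (hs : s ∈ subdifferential (f + g) p) :
    s - gradient f p ∈ subdifferential g p := by
  intro y
  set u := y - p
  have hline : HasDerivWithinAt (fun t : ℝ => f (p + t • u)) ⟪gradient f p, u⟫ (Ioi 0) 0 := by
    simpa [InnerProductSpace.toDual_apply_apply] using
      (hf.hasGradientAt.hasFDerivAt.hasLineDerivAt u).hasDerivWithinAt (s := Ioi 0)
  have hlin : HasDerivWithinAt (fun t : ℝ => f p + t * (⟪s, u⟫ - (g y - g p)))
      (1 * (⟪s, u⟫ - (g y - g p))) (Ioi 0) 0 :=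
    ((hasDerivWithinAt_id 0 _).mul_const _).const_add _
  have hbelow : ∀ᶠ t in 𝓝[>] (0 : ℝ), f p + t * (⟪s, u⟫ - (g y - g p)) ≤ f (p + t • u) := by
    filter_upwards [Ioo_mem_nhdsGT one_pos] with t ⟨ht₀, ht₁⟩
    have hconv :=
      hg.2 (mem_univ p) (mem_univ y) (sub_nonneg.2 ht₁.le) ht₀.le (sub_add_cancel 1 t)
    have hseg : (1 - t) • p + t • y = p + t • u := by simp only [u]; module
    rw [hseg, smul_eq_mul, smul_eq_mul] at hconv
    have hsub := hs (p + t • u)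
    rw [add_sub_cancel_left, real_inner_smul_right, Pi.add_apply, Pi.add_apply] at hsub
    nlinarith
  have := le_of_hasDerivWithinAt_Ioi hlin hline (by simp) hbelow
  rw [inner_sub_left]
  linarith

theorem ConvexOn.exists_mem_subdifferential_inner_eq_dirDeriv [FiniteDimensional ℝ E]
    {f : E → ℝ} (hf : ConvexOn ℝ univ f) (x w : E) :
    ∃ s ∈ subdifferential f x, ⟪s, w⟫ = dirDeriv f x w := by
  have hker : ∀ c : ℝ, c • w = 0 → c • dirDeriv f x w = 0 := by
    intro c hc
    rcases smul_eq_zero.1 hc with rfl | rfl <;> simp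
  set φ₀ := LinearPMap.mkSpanSingleton' (σ := RingHom.id ℝ) w (dirDeriv f x w) hker
  have hφ₀ : ∀ z : φ₀.domain, φ₀ z ≤ dirDeriv f x z := by
    rintro ⟨z, hz⟩
    obtain ⟨c, rfl⟩ := Submodule.mem_span_singleton.1 hz
    rw [LinearPMap.mkSpanSingleton'_apply, RingHom.id_apply, smul_eq_mul]
    exact hf.mul_dirDeriv_le x w c
  obtain ⟨φ, hφ_ext, hφ_le⟩ := exists_extension_of_le_sublinear φ₀ (dirDeriv f x)
    (fun c hc u => hf.dirDeriv_smul x u hc) (hf.dirDeriv_add_le x) hφ₀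
  set s := (InnerProductSpace.toDual ℝ E).symm (LinearMap.toContinuousLinearMap φ)
  have hs : ∀ u, ⟪s, u⟫ = φ u := fun u => InnerProductSpace.toDual_symm_apply
  refine ⟨s, fun y => ?_, ?_⟩
  · have := (hφ_le (y - x)).trans (hf.dirDeriv_le_sub x (y - x))
    rw [add_sub_cancel] at this
    linarith [hs (y - x)]
  · have hw : w ∈ φ₀.domain := Submodule.mem_span_singleton_self w
    rw [hs, hφ_ext ⟨w, hw⟩]
    exact LinearPMap.mkSpanSingleton'_apply_self w _ hker _

end Subdifferential

namespace PointedCone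

variable {ι E : Type*} {a : ι → E}

section Module

variable [AddCommGroup E] [Module ℝ E]

lemma mem_hull_image_finset_iff {s : Finset ι} {x : E} :
    x ∈ hull ℝ (a '' s) ↔ ∃ l : ι → ℝ, (∀ i ∈ s, 0 ≤ l i) ∧ ∑ i ∈ s, l i • a i = x := by
  rw [Submodule.mem_span_image_finset_iff_exists_fun']
  constructor
  · rintro ⟨c, hc⟩
    exact ⟨fun i => c i, fun i _ => (c i).2, hc⟩
  · rintro ⟨l, hl, rfl⟩
    refine ⟨fun i => ⟨max (l i) 0, le_max_right _ _⟩, Finset.sum_congr rfl fun i hi => ?_⟩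
    simp [Nonneg.mk_smul, max_eq_left (hl i hi)]

lemma exists_mem_hull_image_erase [DecidableEq ι] {s : Finset ι} (hs : ¬LinearIndepOn ℝ a s)
    {x : E} (hx : x ∈ hull ℝ (a '' s)) : ∃ j ∈ s, x ∈ hull ℝ (a '' (s.erase j)) := by
  obtain ⟨l, hl, rfl⟩ := mem_hull_image_finset_iff.1 hx
  obtain ⟨μ, hμ, i₀, hi₀, hμi₀⟩ : ∃ μ : ι → ℝ, ∑ i ∈ s, μ i • a i = 0 ∧ ∃ i ∈ s, 0 < μ i := by
    obtain ⟨μ, hμ, i₀, hi₀, hne⟩ := not_linearIndepOn_finset_iff.1 hs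
    rcases hne.lt_or_gt with hneg | hpos
    · exact ⟨-μ, by simp [neg_smul, Finset.sum_neg_distrib, hμ], i₀, hi₀, by simpa⟩
    · exact ⟨μ, hμ, i₀, hi₀, hpos⟩
  -- the largest `c` keeping `l - c • μ` nonnegative makes it vanish at some `j`
  obtain ⟨j, hj, hmin⟩ := (s.filter (0 < μ ·)).exists_min_image (fun i => l i / μ i)
    ⟨i₀, Finset.mem_filter.2 ⟨hi₀, hμi₀⟩⟩
  obtain ⟨hjs, hμj⟩ := Finset.mem_filter.1 hj
  set c := l j / μ j
  have hc : 0 ≤ c := div_nonneg (hl j hjs) hμj.le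
  refine ⟨j, hjs, mem_hull_image_finset_iff.2 ⟨fun i => l i - c * μ i, fun i hi => ?_, ?_⟩⟩
  · have his := Finset.mem_of_mem_erase hi
    rcases le_or_gt (μ i) 0 with hμi | hμi
    · nlinarith [hl i his]
    · have := (le_div_iff₀ hμi).1 (hmin i (Finset.mem_filter.2 ⟨his, hμi⟩))
      linarith
  · rw [Finset.sum_erase s (by simp [c, div_mul_cancel₀ _ hμj.ne'])]
    simp only [sub_smul, Finset.sum_sub_distrib, mul_smul, ← Finset.smul_sum, hμ, smul_zero,
      sub_zero]

lemma exists_linearIndepOn_of_mem_hull_image (s : Finset ι) {x : E}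
    (hx : x ∈ hull ℝ (a '' s)) : ∃ t ⊆ s, LinearIndepOn ℝ a t ∧ x ∈ hull ℝ (a '' t) := by
  classical
  induction s using Finset.strongInduction with
  | H s ih =>
    by_cases hs : LinearIndepOn ℝ a s
    · exact ⟨s, subset_rfl, hs, hx⟩
    · obtain ⟨j, hj, hxj⟩ := exists_mem_hull_image_erase hs hx
      obtain ⟨t, hts, ht, hxt⟩ := ih _ (s.erase_ssubset hj) hxj
      exact ⟨t, hts.trans (s.erase_subset j), ht, hxt⟩

end Module

variable [NormedAddCommGroup E] [NormedSpace ℝ E]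

lemma isClosed_hull_image_of_linearIndepOn {t : Finset ι} (ht : LinearIndepOn ℝ a t) :
    IsClosed (hull ℝ (a '' t) : Set E) := by
  have himage : (hull ℝ (a '' t) : Set E) =
      Fintype.linearCombination ℝ (fun i : t => a i) '' Ici 0 := by
    ext x
    rw [SetLike.mem_coe, Submodule.mem_span_image_finset_iff_exists_fun]
    constructor
    · rintro ⟨c, rfl⟩
      exact ⟨fun i => c i, fun i => (c i).2, by simp [Fintype.linearCombination_apply]⟩
    · rintro ⟨l, hl, rfl⟩
      exact ⟨fun i => ⟨l i, hl i⟩, by simp [Fintype.linearCombination_apply, Nonneg.mk_smul]⟩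
  rw [himage]
  exact (LinearMap.isClosedEmbedding_of_injective (LinearMap.ker_eq_bot.2
    ht.fintypeLinearCombination_injective)).isClosedMap _ isClosed_Ici

theorem isClosed_hull_image (s : Finset ι) : IsClosed (hull ℝ (a '' s) : Set E) := by
  classical
  have hunion : (hull ℝ (a '' s) : Set E) =
      ⋃ t ∈ s.powerset.filter fun t : Finset ι => LinearIndepOn ℝ a t,
        (hull ℝ (a '' t) : Set E) := by
    ext x
    simp only [mem_iUnion, Finset.mem_filter, Finset.mem_powerset, SetLike.mem_coe, exists_prop]
    constructor
    · intro hx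
      obtain ⟨t, hts, ht, hxt⟩ := exists_linearIndepOn_of_mem_hull_image s hx
      exact ⟨t, ⟨hts, ht⟩, hxt⟩
    · rintro ⟨t, ⟨hts, -⟩, hxt⟩
      exact Submodule.span_mono (image_mono (Finset.coe_subset.2 hts)) hxt
  rw [hunion]
  exact isClosed_biUnion_finset fun t ht =>
    isClosed_hull_image_of_linearIndepOn (Finset.mem_filter.1 ht).2

end PointedCone

theorem ConvexOn.exists_kkt_multipliers {E ι : Type*} [NormedAddCommGroup E]
    [InnerProductSpace ℝ E] [FiniteDimensional ℝ E] [Fintype ι] {f : E → ℝ}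
    (hf : ConvexOn ℝ univ f) (a : ι → E) (b : ι → ℝ) {p : E} (hp : ∀ i, b i ≤ ⟪a i, p⟫)
    (hmin : ∀ x, (∀ i, b i ≤ ⟪a i, x⟫) → f p ≤ f x) :
    ∃ l : ι → ℝ, (∀ i, 0 ≤ l i) ∧ (∀ i, l i * (⟪a i, p⟫ - b i) = 0) ∧
      ∑ i, l i • a i ∈ subdifferential f p := by
  classical
  set A := Finset.univ.filter fun i => ⟪a i, p⟫ = b i
  suffices ∃ s ∈ subdifferential f p, s ∈ PointedCone.hull ℝ (a '' A) by
    obtain ⟨s, hs, hsA⟩ := this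
    obtain ⟨l, hl, rfl⟩ := PointedCone.mem_hull_image_finset_iff.1 hsA
    refine ⟨fun i => if i ∈ A then l i else 0, fun i => ?_, fun i => ?_, ?_⟩ <;> dsimp only
    · split_ifs with hi
      exacts [hl i hi, le_rfl]
    · split_ifs with hi
      · simp [(Finset.mem_filter.1 hi).2]
      · simp
    · simpa [ite_smul, Finset.sum_ite_mem] using hs
  by_contra! hdisj
  obtain ⟨φ, hφA, hφneg⟩ := ProperCone.hyperplane_separation
    ⟨PointedCone.hull ℝ (a '' A), PointedCone.isClosed_hull_image A⟩
    (convex_subdifferential f p)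
    (isCompact_subdifferential ((hf.continuousOn isOpen_univ).continuousAt univ_mem))
    (disjoint_left.2 hdisj)
  set w := (InnerProductSpace.toDual ℝ E).symm φ
  have hw : ∀ z, ⟪w, z⟫ = φ z := fun z => InnerProductSpace.toDual_symm_apply
  have hfeas : ∀ᶠ t in 𝓝[>] (0 : ℝ), ∀ i, b i ≤ ⟪a i, p + t • w⟫ := by
    refine eventually_all.2 fun i => ?_
    simp only [inner_add_right, real_inner_smul_right]
    refine eventually_le_add_mul_nhdsGT (hp i) fun hi => ?_
    rw [real_inner_comm, hw]
    exact hφA _ (Submodule.subset_span ⟨i, by simp [A, hi], rfl⟩)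
  obtain ⟨s, hs, hsw⟩ := hf.exists_mem_subdifferential_inner_eq_dirDeriv p w
  have hdir := hf.dirDeriv_nonneg p w (hfeas.mono fun t ht => hmin _ ht)
  have := hφneg s hs
  rw [← hw, real_inner_comm, hsw] at this
  linarith

section Euclidean

variable {n : ℕ}

lemma mVec_apply_eq_inner {p q : ℕ} (A : Matrix (Fin p) (Fin q) ℝ) (v : Euc q) (i : Fin p) :
    mVec A v i = ⟪WithLp.toLp 2 (A i), v⟫ := by
  simp [mVec, PiLp.inner_apply, mul_comm]

lemma mVec_transpose_eq_sum {p q : ℕ} (A : Matrix (Fin p) (Fin q) ℝ) (y : Euc p) :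
    mVec A.transpose y = ∑ i, y i • WithLp.toLp 2 (A i) := by
  ext j
  simp [mVec, mul_comm]

lemma mem_proxSet_of_forall_le {ψ : Euc n → EReal} {x p : Euc n} {c : ℝ} (hp : ψ p = c)
    (hψ : ∀ u, ((c + ⟪x - p, u - p⟫ : ℝ) : EReal) ≤ ψ u) : p ∈ proxSet ψ x := by
  intro u
  have hsq : 1 / 2 * ‖p - x‖ ^ 2 ≤ 1 / 2 * ‖u - x‖ ^ 2 + ⟪x - p, u - p⟫ := by
    rw [← sub_sub_sub_cancel_right u x p, norm_sub_sq_real (u - p) (x - p), norm_sub_rev p x,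
      real_inner_comm]
    nlinarith [sq_nonneg ‖u - p‖]
  calc ((1 / 2 * ‖p - x‖ ^ 2 : ℝ) : EReal) + ψ p
      ≤ ((1 / 2 * ‖u - x‖ ^ 2 : ℝ) : EReal) + ((c + ⟪x - p, u - p⟫ : ℝ) : EReal) := by
        rw [hp, ← EReal.coe_add, ← EReal.coe_add, EReal.coe_le_coe_iff]
        linarith
    _ ≤ ((1 / 2 * ‖u - x‖ ^ 2 : ℝ) : EReal) + ψ u := add_le_add_right (hψ u) _

lemma mem_proxSet_of_mem_subdifferential {ψ : Euc n → ℝ} {x p : Euc n}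
    (hs : x - p ∈ subdifferential ψ p) : p ∈ proxSet (fun u => (ψ u : EReal)) x :=
  mem_proxSet_of_forall_le rfl fun u => EReal.coe_le_coe_iff.2 (hs u)

lemma inner_le_conjFn_iotaInd {d z : Euc n} (hz : ∀ i, d i ≤ z i) (u : Euc n) :
    ((⟪u, z⟫ : ℝ) : EReal) ≤ conjFn (iotaInd d) u :=
  le_iSup_of_le z (by simp [iotaInd, hz])

lemma conjFn_iotaInd_of_nonpos {d y : Euc n} (hy : ∀ i, y i ≤ 0) :
    conjFn (iotaInd d) y = ⟪y, d⟫ := by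
  refine le_antisymm (iSup_le fun z => ?_) (inner_le_conjFn_iotaInd (fun _ => le_rfl) y)
  by_cases hz : ∀ i, d i ≤ z i
  · rw [iotaInd, if_pos hz, sub_zero, EReal.coe_le_coe_iff]
    simp only [PiLp.inner_apply, RCLike.inner_apply, conj_trivial]
    exact Finset.sum_le_sum fun i _ => mul_le_mul_of_nonpos_right (hz i) (hy i)
  · simp [iotaInd, hz]

lemma mem_proxSet_conjFn_iotaInd {d y z : Euc n} {η : ℝ} (hη : 0 ≤ η) (hy : ∀ i, y i ≤ 0)
    (hz : ∀ i, d i ≤ z i) (hslack : ⟪y, d⟫ = ⟪y, z⟫) :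
    y ∈ proxSet (fun u => (η : EReal) * conjFn (iotaInd d) u) (y + η • z) := by
  refine mem_proxSet_of_forall_le (c := η * ⟪y, d⟫) ?_ fun u => ?_
  · rw [conjFn_iotaInd_of_nonpos hy, EReal.coe_mul]
  · have hc : η * ⟪y, d⟫ + ⟪y + η • z - y, u - y⟫ = η * ⟪u, z⟫ := by
      rw [add_sub_cancel_left, real_inner_smul_left, inner_sub_right, hslack, real_inner_comm u,
        real_inner_comm y]
      ring
    rw [hc, EReal.coe_mul]
    exact mul_le_mul_of_nonneg_left (inner_le_conjFn_iotaInd hz u) (by exact_mod_cast hη)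

end Euclidean

theorem stmt0_general {m₁ m₂ : ℕ} (D : Matrix (Fin m₂) (Fin m₁) ℝ) (d : Euc m₂)
    (f g : Euc m₁ → ℝ)
    (hfdiff : Differentiable ℝ f) (hfconv : ConvexOn ℝ Set.univ f)
    (hgconv : ConvexOn ℝ Set.univ g)
    (vsol : Euc m₁)
    (hfeas : ∀ i, d i ≤ mVec D vsol i)
    (hmin : ∀ v : Euc m₁, (∀ i, d i ≤ mVec D v i) → f vsol + g vsol ≤ f v + g v)
    (β η : ℝ) (hβ : 0 < β) (hη : 0 < η) :
    ∃ y : Euc m₂,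
      vsol ∈ proxSet (fun u => ((β * g u : ℝ) : EReal))
            (vsol - β • (gradient f vsol + mVec D.transpose y)) ∧
      y ∈ proxSet (fun u => ((η : ℝ) : EReal) * conjFn (iotaInd d) u)
            (y + η • mVec D vsol) := by
  obtain ⟨l, hl, hslack, hsub⟩ := (hfconv.add hgconv).exists_kkt_multipliers
    (fun i => WithLp.toLp 2 (D i)) (fun i => d i) (by simpa only [mVec_apply_eq_inner] using hfeas)
    (by simpa only [mVec_apply_eq_inner, Pi.add_apply] using hmin)
  set y : Euc m₂ := WithLp.toLp 2 (-l)
  refine ⟨y, mem_proxSet_of_mem_subdifferential ?_,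
    mem_proxSet_conjFn_iotaInd hη.le (fun i => by simpa [y] using hl i) hfeas ?_⟩
  · convert smul_mem_subdifferential hβ.le
      (sub_gradient_mem_subdifferential (hfdiff vsol) hgconv hsub) using 1
    rw [mVec_transpose_eq_sum]
    simp only [y, Pi.neg_apply, neg_smul, Finset.sum_neg_distrib]
    module
  · simp only [PiLp.inner_apply, RCLike.inner_apply, conj_trivial, mVec_apply_eq_inner]
    refine Finset.sum_congr rfl fun i _ => ?_
    simp only [y, Pi.neg_apply]
    linear_combination hslack i

/-- if vsol solves the MPAERL model (minimizes f + g over {v | Dv ≥ d}),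
then for every β > 0, η > 0 there is y such that (vsol; y) is a fixed point of T_{β,η}:
vsol = prox_{βg}(vsol − β(∇f(vsol) + Dᵀy)) and y = prox_{η ι_d*}(y + ηDvsol). -/
theorem stmt0 {m₁ m₂ : ℕ} (D : Matrix (Fin m₂) (Fin m₁) ℝ) (d : Euc m₂)
    (f g : Euc m₁ → ℝ) (L : ℝ)
    (hfdiff : Differentiable ℝ f) (hfconv : ConvexOn ℝ Set.univ f)
    (hflip : ∀ x y : Euc m₁, ‖gradient f x - gradient f y‖ ≤ L * ‖x - y‖)
    (hgconv : ConvexOn ℝ Set.univ g)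
    (vsol : Euc m₁)
    (hfeas : ∀ i, d i ≤ mVec D vsol i)
    (hmin : ∀ v : Euc m₁, (∀ i, d i ≤ mVec D v i) → f vsol + g vsol ≤ f v + g v)
    (β η : ℝ) (hβ : 0 < β) (hη : 0 < η) :
    ∃ y : Euc m₂,
      vsol ∈ proxSet (fun u => ((β * g u : ℝ) : EReal))
            (vsol - β • (gradient f vsol + mVec D.transpose y)) ∧
      y ∈ proxSet (fun u => ((η : ℝ) : EReal) * conjFn (iotaInd d) u)
            (y + η • mVec D vsol) :=
  stmt0_general D d f g hfdiff hfconv hgconv vsol hfeas hmin β η hβ hη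
end
end

section
/- Suppose there exist β > 0 and η > 0 such that z = (v; y) ∈ ℝ^{m₁+m₂} is a fixed point of T_{β,η}, i.e. v = prox_{βg}(v − β(∇f(v) + Dᵀy)) and y = prox_{η ι_d*}(y + ηDv). Then v is a solution of the MPAERL model, i.e. v minimizes f(u) + g(u) over {u ∈ ℝ^{m₁} : Du ≥ d componentwise}. -/
/-!
A fixed point of `T_{β,η}` encodes the KKT conditions of the constrained problem. Since
`p = prox_φ(x)` means `x - p ∈ ∂φ(p)`, the first equation says `-(∇f(v) + Dᵀy) ∈ ∂g(v)`. As
`ι_d*` is `⟪·, d⟫` on the nonpositive orthant and `⊤` off it, the second says that `Dv - d` lies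
in the normal cone of that orthant at `y`: `y ≤ 0`, `Dv ≥ d` and `⟪y, Dv - d⟫ = 0`. With the
gradient inequality for `f`, every feasible `u` satisfies
`f u + g u ≥ f v + g v - ⟪y, Du - Dv⟫ = f v + g v - ⟪y, Du - d⟫ ≥ f v + g v`.
-/

noncomputable section

open scoped BigOperators

open Set Filter Topology

section Convex

variable {E : Type*}

theorem ConvexOn.apply_sub_le_of_hasFDerivAt [NormedAddCommGroup E] [NormedSpace ℝ E]
    {s : Set E} {f : E → ℝ} {f' : E →L[ℝ] ℝ} {x y : E} (hf : ConvexOn ℝ s f)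
    (hx : x ∈ s) (hy : y ∈ s) (hf' : HasFDerivAt f f' x) :
    f' (y - x) ≤ f y - f x := by
  have hline : ConvexOn ℝ (AffineMap.lineMap (k := ℝ) x y ⁻¹' s) (f ∘ AffineMap.lineMap x y) :=
    hf.comp_affineMap _
  have hderiv : HasDerivAt (f ∘ AffineMap.lineMap (k := ℝ) x y) (f' (y - x)) 0 := by
    have hf'0 : HasFDerivAt f f' (AffineMap.lineMap x y (0 : ℝ)) := by
      rwa [AffineMap.lineMap_apply_zero]
    exact hf'0.comp_hasDerivAt 0 AffineMap.hasDerivAt_lineMap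
  simpa [slope_def_field] using
    hline.le_slope_of_hasDerivAt (by simpa using hx) (by simpa using hy) one_pos hderiv

variable [NormedAddCommGroup E] [InnerProductSpace ℝ E]

theorem ConvexOn.add_inner_le_of_isMinOn {s : Set E} {φ : E → ℝ} (hφ : ConvexOn ℝ s φ)
    {x p : E} (hp : p ∈ s) (hmin : IsMinOn (fun u => 1 / 2 * ‖u - x‖ ^ 2 + φ u) s p)
    {u : E} (hu : u ∈ s) :
    φ p + inner ℝ (x - p) (u - p) ≤ φ u := by
  have key : ∀ t : ℝ, 0 < t → t ≤ 1 →
      φ p + inner ℝ (x - p) (u - p) - φ u ≤ t * (1 / 2 * ‖u - p‖ ^ 2) := by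
    intro t ht0 ht1
    have hmem : p + t • (u - p) ∈ s := hφ.1.add_smul_sub_mem hp hu ⟨ht0.le, ht1⟩
    have hconv : φ (p + t • (u - p)) ≤ (1 - t) * φ p + t * φ u := by
      have h := hφ.2 hp hu (sub_nonneg.2 ht1) ht0.le (by ring)
      rwa [show (1 - t) • p + t • u = p + t • (u - p) by module] at h
    have hnorm : ‖p + t • (u - p) - x‖ ^ 2
        = ‖p - x‖ ^ 2 - 2 * t * inner ℝ (x - p) (u - p) + t ^ 2 * ‖u - p‖ ^ 2 := by
      rw [show p + t • (u - p) - x = (p - x) + t • (u - p) by abel, norm_add_sq_real,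
        norm_smul, real_inner_smul_right, Real.norm_eq_abs, mul_pow, sq_abs, ← neg_sub x p,
        inner_neg_left]
      ring
    have hle := hmin hmem
    simp only [mem_ofPred_eq, hnorm] at hle
    nlinarith
  have hlim : Tendsto (fun t : ℝ => t * (1 / 2 * ‖u - p‖ ^ 2)) (𝓝[>] 0) (𝓝 0) :=
    ((continuous_mul_const _).tendsto' 0 0 (zero_mul _)).mono_left nhdsWithin_le_nhds
  have hgap := ge_of_tendsto hlim <| by
    filter_upwards [Ioc_mem_nhdsGT (zero_lt_one' ℝ)] with t ht using key t ht.1 ht.2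
  linarith

end Convex

section Euclidean

variable {ι : Type*}

lemma convex_nonposOrthant : Convex ℝ {u : EuclideanSpace ℝ ι | ∀ i, u i ≤ 0} := by
  intro u hu w hw a b ha hb _ i
  simpa using add_nonpos (mul_nonpos_of_nonneg_of_nonpos ha (hu i))
    (mul_nonpos_of_nonneg_of_nonpos hb (hw i))

variable [Fintype ι]

lemma inner_nonpos_of_nonpos_of_nonneg {y w : EuclideanSpace ℝ ι} (hy : ∀ i, y i ≤ 0)
    (hw : ∀ i, 0 ≤ w i) : inner ℝ y w ≤ 0 := by
  simp only [PiLp.inner_apply, RCLike.inner_apply, conj_trivial]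
  exact Finset.sum_nonpos fun i _ => mul_nonpos_of_nonneg_of_nonpos (hw i) (hy i)

lemma nonneg_and_inner_eq_zero_of_forall_inner_sub_nonpos [DecidableEq ι]
    {y z : EuclideanSpace ℝ ι} (hy : ∀ i, y i ≤ 0)
    (h : ∀ u : EuclideanSpace ℝ ι, (∀ i, u i ≤ 0) → inner ℝ (u - y) z ≤ 0) :
    (∀ i, 0 ≤ z i) ∧ inner ℝ y z = 0 := by
  refine ⟨fun i => ?_, le_antisymm ?_ ?_⟩
  · have hi := h (y - EuclideanSpace.single i 1) fun j => by
      by_cases hj : j = i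
      · simp only [hj, PiLp.sub_apply, PiLp.single_apply, if_true]; linarith [hy i]
      · simpa [hj] using hy j
    simpa [EuclideanSpace.inner_single_left] using hi
  · simpa [two_smul] using h ((2 : ℝ) • y) fun j => by
      simpa using mul_nonpos_of_nonneg_of_nonpos zero_le_two (hy j)
  · simpa using h 0 fun _ => le_rfl

end Euclidean

lemma conjFn_iotaInd {n : ℕ} (d u : Euc n) :
    conjFn (iotaInd d) u = if ∀ i, u i ≤ 0 then ((inner ℝ u d : ℝ) : EReal) else ⊤ := by
  unfold conjFn
  split_ifs with hu
  · refine le_antisymm (iSup_le fun x => ?_) ?_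
    · unfold iotaInd
      split_ifs with hx
      · rw [sub_zero, EReal.coe_le_coe_iff, ← sub_nonpos, ← inner_sub_right]
        exact inner_nonpos_of_nonpos_of_nonneg hu fun i => by simpa using hx i
      · simp
    · simpa [iotaInd] using le_iSup (fun x => ((inner ℝ u x : ℝ) : EReal) - iotaInd d x) d
  · obtain ⟨i, hi⟩ : ∃ i, 0 < u i := by simpa using hu
    refine (EReal.eq_top_iff_forall_lt _).2 fun r => lt_iSup_iff.2 ?_
    -- the feasible ray `d + t • eᵢ`, `t ≥ 0`, on which the objective `⟪u, d⟫ + t uᵢ` is unbounded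
    set t := max 0 ((r + 1 - inner ℝ u d) / u i)
    have ht : 0 ≤ t := le_max_left _ _
    have hr : r < inner ℝ u d + t * u i := by
      have ht' := (div_le_iff₀ hi).1 (le_max_right 0 ((r + 1 - inner ℝ u d) / u i))
      linarith
    refine ⟨d + t • EuclideanSpace.single i 1, ?_⟩
    have hfeas : ∀ j, d j ≤ (d + t • EuclideanSpace.single i (1 : ℝ)) j := fun j => by
      by_cases hj : j = i <;> simp [hj, ht]
    rw [iotaInd, if_pos hfeas, sub_zero, inner_add_right, real_inner_smul_right,
      EuclideanSpace.inner_single_right]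
    exact_mod_cast (by simpa [mul_comm] using hr)

lemma mem_proxSet_coe_iff {n : ℕ} {φ : Euc n → ℝ} {x p : Euc n} :
    p ∈ proxSet (fun u => (φ u : EReal)) x ↔
      IsMinOn (fun u => 1 / 2 * ‖u - x‖ ^ 2 + φ u) univ p := by
  simp only [proxSet, isMinOn_univ_iff, ← EReal.coe_add, EReal.coe_le_coe_iff, mem_ofPred_eq]

lemma isMinOn_of_mem_proxSet_conjFn_iotaInd {n : ℕ} {d x y : Euc n} {η : ℝ} (hη : 0 < η)
    (hy : y ∈ proxSet (fun u => (η : EReal) * conjFn (iotaInd d) u) x) :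
    (∀ i, y i ≤ 0) ∧
      IsMinOn (fun u => 1 / 2 * ‖u - x‖ ^ 2 + η * inner ℝ u d) {u | ∀ i, u i ≤ 0} y := by
  have hy_nonpos : ∀ i, y i ≤ 0 := by
    by_contra hcon
    have h := hy 0
    have h0 : ∀ i, (0 : Euc n) i ≤ 0 := fun _ => le_rfl
    simp only [conjFn_iotaInd, if_neg hcon, if_pos h0, EReal.coe_mul_top_of_pos hη,
      EReal.coe_add_top, top_le_iff, ← EReal.coe_mul, ← EReal.coe_add] at h
    exact EReal.coe_ne_top _ h
  refine ⟨hy_nonpos, fun u (hu : ∀ i, u i ≤ 0) => ?_⟩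
  have h := hy u
  simp only [conjFn_iotaInd, if_pos hy_nonpos, if_pos hu, ← EReal.coe_mul, ← EReal.coe_add,
    EReal.coe_le_coe_iff] at h
  exact h

lemma le_add_inner_of_mem_proxSet {n : ℕ} {g : Euc n → ℝ} (hg : ConvexOn ℝ univ g) {β : ℝ}
    (hβ : 0 < β) {v w : Euc n} (hv : v ∈ proxSet (fun u => ((β * g u : ℝ) : EReal)) (v - β • w))
    (u : Euc n) : g v ≤ g u + inner ℝ w (u - v) := by
  have h := (hg.smul hβ.le).add_inner_le_of_isMinOn (mem_univ v)
    (mem_proxSet_coe_iff.1 hv) (mem_univ u)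
  simp only [smul_eq_mul, sub_sub_cancel_left, inner_neg_left, real_inner_smul_left] at h
  nlinarith

lemma kkt_of_mem_proxSet_conjFn_iotaInd {n : ℕ} {d y z : Euc n} {η : ℝ} (hη : 0 < η)
    (hy : y ∈ proxSet (fun u => (η : EReal) * conjFn (iotaInd d) u) (y + η • z)) :
    (∀ i, d i ≤ z i) ∧ (∀ i, y i ≤ 0) ∧ inner ℝ y z = inner ℝ y d := by
  obtain ⟨hy_nonpos, hmin⟩ := isMinOn_of_mem_proxSet_conjFn_iotaInd hη hy
  have hlin : ConvexOn ℝ {u : Euc n | ∀ i, u i ≤ 0} fun u => η * inner ℝ u d := by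
    refine ⟨convex_nonposOrthant, fun a _ b _ s t _ _ _ => le_of_eq ?_⟩
    simp only [inner_add_left, real_inner_smul_left, smul_eq_mul]
    ring
  obtain ⟨hz, hslack⟩ := nonneg_and_inner_eq_zero_of_forall_inner_sub_nonpos (z := z - d)
    hy_nonpos fun u hu => by
      have h := hlin.add_inner_le_of_isMinOn hy_nonpos hmin hu
      simp only [add_sub_cancel_left, real_inner_smul_left] at h
      have hd : inner ℝ d (u - y) = inner ℝ u d - inner ℝ y d := by
        rw [inner_sub_right, real_inner_comm u, real_inner_comm y]
      rw [real_inner_comm, inner_sub_left, hd, sub_nonpos]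
      exact le_of_mul_le_mul_left (by linarith) hη
  exact ⟨fun i => by simpa using hz i, hy_nonpos, by rwa [inner_sub_right, sub_eq_zero] at hslack⟩

lemma inner_mVec_transpose {p q : ℕ} (A : Matrix (Fin p) (Fin q) ℝ) (y : Euc p) (u : Euc q) :
    inner ℝ (mVec A.transpose y) u = inner ℝ y (mVec A u) := by
  simp only [PiLp.inner_apply, RCLike.inner_apply, conj_trivial, mVec, Matrix.transpose_apply,
    Finset.sum_mul, Finset.mul_sum]
  rw [Finset.sum_comm]
  exact Finset.sum_congr rfl fun i _ => Finset.sum_congr rfl fun j _ => by ring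

theorem stmt1_general {m₁ m₂ : ℕ} (D : Matrix (Fin m₂) (Fin m₁) ℝ) (d : Euc m₂)
    (f g : Euc m₁ → ℝ)
    (hfdiff : Differentiable ℝ f) (hfconv : ConvexOn ℝ Set.univ f)
    (hgconv : ConvexOn ℝ Set.univ g)
    (v : Euc m₁) (y : Euc m₂) (β η : ℝ) (hβ : 0 < β) (hη : 0 < η)
    (hfix1 : v ∈ proxSet (fun u => ((β * g u : ℝ) : EReal))
               (v - β • (gradient f v + mVec D.transpose y)))
    (hfix2 : y ∈ proxSet (fun u => ((η : ℝ) : EReal) * conjFn (iotaInd d) u)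
               (y + η • mVec D v)) :
    (∀ i, d i ≤ mVec D v i) ∧
      ∀ u : Euc m₁, (∀ i, d i ≤ mVec D u i) → f v + g v ≤ f u + g u := by
  obtain ⟨hfeas, hy, hslack⟩ := kkt_of_mem_proxSet_conjFn_iotaInd hη hfix2
  refine ⟨hfeas, fun u hu => ?_⟩
  have hf : inner ℝ (gradient f v) (u - v) ≤ f u - f v := by
    simpa using hfconv.apply_sub_le_of_hasFDerivAt (mem_univ v) (mem_univ u)
      (hfdiff v).hasGradientAt.hasFDerivAt
  have hg := le_add_inner_of_mem_proxSet hgconv hβ hfix1 u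
  have hDu : inner ℝ y (mVec D u - d) ≤ 0 :=
    inner_nonpos_of_nonpos_of_nonneg hy fun i => by simpa using hu i
  simp only [inner_add_left, inner_mVec_transpose, inner_sub_right] at hf hg hDu
  linarith

/-- if there exist β > 0, η > 0 such that z = (v; y) is a fixed point of
T_{β,η}, i.e. v = prox_{βg}(v − β(∇f(v) + Dᵀy)) and y = prox_{η ι_d*}(y + ηDv),
then v solves the MPAERL model: v minimizes f + g over {u | Du ≥ d}. -/
theorem stmt1 {m₁ m₂ : ℕ} (D : Matrix (Fin m₂) (Fin m₁) ℝ) (d : Euc m₂)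
    (f g : Euc m₁ → ℝ) (L : ℝ)
    (hfdiff : Differentiable ℝ f) (hfconv : ConvexOn ℝ Set.univ f)
    (hflip : ∀ x y : Euc m₁, ‖gradient f x - gradient f y‖ ≤ L * ‖x - y‖)
    (hgconv : ConvexOn ℝ Set.univ g)
    (v : Euc m₁) (y : Euc m₂) (β η : ℝ) (hβ : 0 < β) (hη : 0 < η)
    (hfix1 : v ∈ proxSet (fun u => ((β * g u : ℝ) : EReal))
               (v - β • (gradient f v + mVec D.transpose y)))
    (hfix2 : y ∈ proxSet (fun u => ((η : ℝ) : EReal) * conjFn (iotaInd d) u)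
               (y + η • mVec D v)) :
    (∀ i, d i ≤ mVec D v i) ∧
      ∀ u : Euc m₁, (∀ i, d i ≤ mVec D u i) → f v + g v ≤ f u + g u :=
  stmt1_general D d f g hfdiff hfconv hgconv v y β η hβ hη hfix1 hfix2
end
end

section
/- For every z = (v; y) ∈ ℝ^{m₁+m₂} there exists a unique u = (u₁; u₂) ∈ ℝ^{m₁+m₂} satisfying u = F((E − G)u + Gz); explicitly, u₁ = prox_{βg}(v − βDᵀy) and u₂ = prox_{η ι_d*}(2ηDu₁ − ηDv + y). Hence the operator T_G : ℝ^{m₁+m₂} → ℝ^{m₁+m₂}, T_G(z) := the unique such u, is well-defined. -/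
noncomputable section

open scoped BigOperators

/-!
Both proximal problems are `1`-strongly convex, so each has at most one solution, and
the second depends on the first only through the point where its prox is evaluated: the
system is solved by computing `u₁` and then `u₂`. For the finite convex `βg` a minimiser
exists because the quadratic term dominates the at most linear decrease of a convex
function. The conjugate `ι_d*` is `⟪d, ·⟫` on the nonpositive orthant and `⊤` off it, so
its prox is an explicit coordinatewise clamp.
-/

open Set Filter Metric
open scoped RealInnerProductSpace

theorem existsUnique_prod_of_existsUnique {α β : Type*} {P : α → Prop} {Q : α → β → Prop}
    (hP : ∃! a, P a) (hQ : ∀ a, ∃! b, Q a b) : ∃! p : α × β, P p.1 ∧ Q p.1 p.2 := by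
  obtain ⟨a, ha, ha_unique⟩ := hP
  obtain ⟨b, hb, hb_unique⟩ := hQ a
  refine ⟨(a, b), ⟨ha, hb⟩, fun ⟨a', b'⟩ ⟨ha', hb'⟩ => ?_⟩
  obtain rfl := ha_unique a' ha'
  obtain rfl := hb_unique b' hb'
  rfl

section InnerProductSpace

variable {E : Type*} [NormedAddCommGroup E] [InnerProductSpace ℝ E] {C : Set E} {f : E → ℝ}

/-- Up to an affine term, `½‖u - x‖² + f u` is `½‖u‖² + f u`, hence `1`-strongly
convex. -/
theorem ConvexOn.strictConvexOn_half_norm_sub_sq_add (hf : ConvexOn ℝ C f) (x : E) :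
    StrictConvexOn ℝ C fun u => 1 / 2 * ‖u - x‖ ^ 2 + f u := by
  have hstrong : StrongConvexOn C 1 fun u => 1 / 2 * ‖u - x‖ ^ 2 + f u := by
    rw [strongConvexOn_iff_convex]
    have hshift : (fun u => 1 / 2 * ‖u - x‖ ^ 2 + f u - 1 / 2 * ‖u‖ ^ 2)
        = fun u => f u + (-innerₛₗ ℝ x u + 1 / 2 * ‖x‖ ^ 2) := by
      funext u
      rw [innerₛₗ_apply_apply, norm_sub_sq_real, real_inner_comm x u]
      ring
    rw [hshift]
    exact hf.add (((-innerₛₗ ℝ x).convexOn hf.1).add_const _)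
  exact hstrong.strictConvexOn one_pos

theorem ConvexOn.add_norm_sub_mul_le (hf : ConvexOn ℝ univ f) {x u : E} {c : ℝ}
    (hc : ∀ w ∈ closedBall x 1, c ≤ f w) (hu : 1 ≤ ‖u - x‖) :
    f x + ‖u - x‖ * (c - f x) ≤ f u := by
  set r := ‖u - x‖
  have hr : 0 < r := one_pos.trans_le hu
  have hw : (1 - r⁻¹) • x + r⁻¹ • u ∈ closedBall x 1 := by
    have : (1 - r⁻¹) • x + r⁻¹ • u - x = r⁻¹ • (u - x) := by module
    rw [mem_closedBall, dist_eq_norm, this, norm_smul, norm_inv, Real.norm_of_nonneg hr.le,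
      inv_mul_cancel₀ hr.ne']
  have hconv := hf.2 (mem_univ x) (mem_univ u) (sub_nonneg.2 (inv_le_one_of_one_le₀ hu))
    (inv_nonneg.2 hr.le) (sub_add_cancel 1 r⁻¹)
  have hmul : r * c ≤ (r - 1) * f x + f u := calc
    r * c ≤ r * ((1 - r⁻¹) * f x + r⁻¹ * f u) :=
      mul_le_mul_of_nonneg_left ((hc _ hw).trans hconv) hr.le
    _ = (r - 1) * f x + f u := by field_simp
  linarith

theorem ConvexOn.exists_isMinOn_half_norm_sub_sq_add [FiniteDimensional ℝ E]
    (hf : ConvexOn ℝ univ f) (x : E) :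
    ∃ p, IsMinOn (fun u => 1 / 2 * ‖u - x‖ ^ 2 + f u) univ p := by
  have hf_cont : Continuous f := continuousOn_univ.mp (hf.continuousOn isOpen_univ)
  obtain ⟨c, hc⟩ := (isCompact_closedBall x 1).bddBelow_image hf_cont.continuousOn
  set K := |c - f x|
  -- Convexity loses at most `‖u - x‖ * K`, which `½‖u - x‖²` beats once `‖u - x‖ ≥ 2K`.
  have hfar : ∀ᶠ u in cocompact E,
      1 / 2 * ‖x - x‖ ^ 2 + f x ≤ 1 / 2 * ‖u - x‖ ^ 2 + f u := by
    filter_upwards [(tendsto_dist_right_cocompact_atTop x).eventually_ge_atTop (max 1 (2 * K))]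
      with u hu
    rw [dist_eq_norm, max_le_iff] at hu
    rw [sub_self, norm_zero]
    have hgrowth := hf.add_norm_sub_mul_le (fun w hw => hc (mem_image_of_mem f hw)) hu.1
    have hK : 0 ≤ c - f x + K := by linarith [neg_abs_le (c - f x)]
    nlinarith [mul_nonneg (norm_nonneg (u - x)) hK,
      mul_nonneg (norm_nonneg (u - x)) (sub_nonneg.2 hu.2)]
  have hobj_cont : Continuous fun u => 1 / 2 * ‖u - x‖ ^ 2 + f u := by fun_prop
  obtain ⟨p, hp⟩ := hobj_cont.exists_forall_le' x hfar
  exact ⟨p, fun u _ => hp u⟩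

theorem ConvexOn.existsUnique_isMinOn_half_norm_sub_sq_add [FiniteDimensional ℝ E]
    (hf : ConvexOn ℝ univ f) (x : E) :
    ∃! p, IsMinOn (fun u => 1 / 2 * ‖u - x‖ ^ 2 + f u) univ p := by
  obtain ⟨p, hp⟩ := hf.exists_isMinOn_half_norm_sub_sq_add x
  exact ⟨p, hp, fun q hq =>
    (hf.strictConvexOn_half_norm_sub_sq_add x).eq_of_isMinOn hq hp (mem_univ q) (mem_univ p)⟩

end InnerProductSpace

section Euclidean

variable {n : ℕ}

theorem mem_proxSet_iff_isMinOn {ψ : Euc n → EReal} {h : Euc n → ℝ} {C : Set (Euc n)}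
    (hC : C.Nonempty) (hψ_mem : ∀ w ∈ C, ψ w = h w) (hψ_notMem : ∀ w ∉ C, ψ w = ⊤)
    {x p : Euc n} :
    p ∈ proxSet ψ x ↔ p ∈ C ∧ IsMinOn (fun u => 1 / 2 * ‖u - x‖ ^ 2 + h u) C p := by
  have hfinite : ∀ u ∈ C, ((1 / 2 * ‖u - x‖ ^ 2 : ℝ) : EReal) + ψ u
      = ((1 / 2 * ‖u - x‖ ^ 2 + h u : ℝ) : EReal) := fun u hu => by
    rw [hψ_mem u hu, EReal.coe_add]
  constructor
  · intro hp
    have hpC : p ∈ C := by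
      obtain ⟨c, hc⟩ := hC
      by_contra hpC
      have := hp c
      rw [hψ_notMem p hpC, EReal.coe_add_top, hfinite c hc] at this
      exact EReal.coe_ne_top _ (top_le_iff.1 this)
    refine ⟨hpC, isMinOn_iff.2 fun u hu => ?_⟩
    have := hp u
    rwa [hfinite p hpC, hfinite u hu, EReal.coe_le_coe_iff] at this
  · rintro ⟨hpC, hmin⟩ u
    by_cases hu : u ∈ C
    · rw [hfinite p hpC, hfinite u hu, EReal.coe_le_coe_iff]
      exact isMinOn_iff.1 hmin u hu
    · rw [hψ_notMem u hu, EReal.coe_add_top]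
      exact le_top

theorem existsUnique_mem_proxSet_coe {h : Euc n → ℝ} (hh : ConvexOn ℝ univ h)
    (x : Euc n) : ∃! p, p ∈ proxSet (fun w => (h w : EReal)) x := by
  simpa only [mem_proxSet_iff_isMinOn univ_nonempty (fun _ _ => rfl)
    (fun w hw => absurd (mem_univ w) hw), mem_univ, true_and]
    using hh.existsUnique_isMinOn_half_norm_sub_sq_add x

def nonposOrthant (n : ℕ) : Set (Euc n) := {w | ∀ i, w i ≤ 0}

theorem convex_nonposOrthant_s2 (n : ℕ) : Convex ℝ (nonposOrthant n) := by
  intro x hx y hy a b ha hb _ i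
  simpa using add_nonpos (mul_nonpos_of_nonneg_of_nonpos ha (hx i))
    (mul_nonpos_of_nonneg_of_nonpos hb (hy i))

theorem conjFn_iotaInd_of_mem {d w : Euc n} (hw : w ∈ nonposOrthant n) :
    conjFn (iotaInd d) w = ⟪d, w⟫ := by
  refine le_antisymm (iSup_le fun u => ?_) (le_iSup_of_le d ?_)
  · by_cases hu : ∀ i, d i ≤ u i
    · rw [iotaInd, if_pos hu, sub_zero, EReal.coe_le_coe_iff, real_inner_comm w d]
      simp only [PiLp.inner_apply, RCLike.inner_apply, conj_trivial]
      exact Finset.sum_le_sum fun i _ => mul_le_mul_of_nonpos_right (hu i) (hw i)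
    · simp [iotaInd, hu]
  · simp [iotaInd, real_inner_comm]

/-- Moving `d` along a coordinate where `w` is positive stays feasible and makes `⟪w, ·⟫`
unbounded. -/
theorem conjFn_iotaInd_of_notMem {d w : Euc n} (hw : w ∉ nonposOrthant n) :
    conjFn (iotaInd d) w = ⊤ := by
  obtain ⟨i, hi⟩ : ∃ i, 0 < w i := by simpa [nonposOrthant] using hw
  refine iSup_eq_top.2 fun b hb => ?_
  obtain ⟨r, hbr, -⟩ := EReal.lt_iff_exists_real_btwn.1 hb
  obtain ⟨k, hk⟩ := exists_nat_gt ((r - ⟪w, d⟫) / w i)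
  rw [div_lt_iff₀ hi] at hk
  set u := d + (k : ℝ) • EuclideanSpace.single i (1 : ℝ)
  have hu : ∀ j, d j ≤ u j := fun j => by
    by_cases hj : j = i <;> simp [u, hj]
  refine ⟨u, hbr.trans_le ?_⟩
  rw [iotaInd, if_pos hu, sub_zero, EReal.coe_le_coe_iff, inner_add_right, inner_smul_right,
    EuclideanSpace.inner_single_right]
  simp only [one_mul, conj_trivial]
  linarith

theorem isMinOn_Iic_zero_half_sq_sub_add_mul (a c : ℝ) :
    IsMinOn (fun s => 1 / 2 * (s - a) ^ 2 + c * s) (Iic 0) (min 0 (a - c)) := by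
  refine isMinOn_iff.2 fun s (hs : s ≤ 0) => ?_
  rcases le_total (a - c) 0 with h | h
  · rw [min_eq_right h]; nlinarith [sq_nonneg (s - (a - c))]
  · rw [min_eq_left h]; nlinarith [mul_nonneg h (neg_nonneg.mpr hs)]

/-- The problem separates over coordinates, and each coordinate is clamped at `0`. -/
theorem isMinOn_nonposOrthant_half_norm_sub_sq_add_inner (a c : Euc n) :
    IsMinOn (fun u => 1 / 2 * ‖u - a‖ ^ 2 + ⟪c, u⟫) (nonposOrthant n)
      (WithLp.toLp 2 fun i => min 0 (a i - c i)) := by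
  have hsplit : ∀ u : Euc n, 1 / 2 * ‖u - a‖ ^ 2 + ⟪c, u⟫
      = ∑ i, (1 / 2 * (u i - a i) ^ 2 + c i * u i) := fun u => by
    simp only [EuclideanSpace.real_norm_sq_eq, PiLp.sub_apply, PiLp.inner_apply,
      RCLike.inner_apply, conj_trivial, Finset.mul_sum, ← Finset.sum_add_distrib]
    ring_nf
  refine isMinOn_iff.2 fun u hu => ?_
  rw [hsplit, hsplit]
  exact Finset.sum_le_sum fun i _ =>
    isMinOn_iff.1 (isMinOn_Iic_zero_half_sq_sub_add_mul (a i) (c i)) (u i) (hu i)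

theorem existsUnique_mem_proxSet_coe_mul_conjFn_iotaInd (d : Euc n) {η : ℝ} (hη : 0 < η)
    (a : Euc n) :
    ∃! p, p ∈ proxSet (fun w => (η : EReal) * conjFn (iotaInd d) w) a := by
  have hprox : ∀ p, p ∈ proxSet (fun w => (η : EReal) * conjFn (iotaInd d) w) a ↔
      p ∈ nonposOrthant n ∧ IsMinOn (fun u => 1 / 2 * ‖u - a‖ ^ 2 + ⟪η • d, u⟫) _ p :=
    fun p => mem_proxSet_iff_isMinOn (C := nonposOrthant n) ⟨0, fun _ => le_rfl⟩
      (fun w hw => by rw [conjFn_iotaInd_of_mem hw, ← EReal.coe_mul, real_inner_smul_left])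
      (fun w hw => by
        rw [conjFn_iotaInd_of_notMem hw, EReal.mul_top_of_pos (EReal.coe_pos.2 hη)])
  simp only [hprox]
  set q : Euc n := WithLp.toLp 2 fun i => min 0 (a i - (η • d) i)
  have hq : q ∈ nonposOrthant n := fun i => min_le_left _ _
  have hq_min := isMinOn_nonposOrthant_half_norm_sub_sq_add_inner a (η • d)
  have hconv := (innerₛₗ ℝ (η • d)).convexOn (convex_nonposOrthant_s2 n)
  exact ⟨q, ⟨hq, hq_min⟩, fun p ⟨hp, hp_min⟩ =>
    (hconv.strictConvexOn_half_norm_sub_sq_add a).eq_of_isMinOn hp_min hq_min hp hq⟩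

end Euclidean

/-- for every z = (v; y) there exists a unique u = (u₁; u₂) with
u = F((E − G)u + Gz), explicitly u₁ = prox_{βg}(v − βDᵀy) and
u₂ = prox_{η ι_d*}(2ηDu₁ − ηDv + y); hence T_G is well-defined. -/
theorem stmt2 {m₁ m₂ : ℕ} (D : Matrix (Fin m₂) (Fin m₁) ℝ) (d : Euc m₂)
    (g : Euc m₁ → ℝ) (hgconv : ConvexOn ℝ Set.univ g)
    (β η : ℝ) (hβ : 0 < β) (hη : 0 < η)
    (v : Euc m₁) (y : Euc m₂) :
    ∃! u : Euc m₁ × Euc m₂,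
      u.1 ∈ proxSet (fun w => ((β * g w : ℝ) : EReal)) (v - β • mVec D.transpose y) ∧
      u.2 ∈ proxSet (fun w => ((η : ℝ) : EReal) * conjFn (iotaInd d) w)
              ((2 * η) • mVec D u.1 - η • mVec D v + y) :=
  existsUnique_prod_of_existsUnique
    (Q := fun u₁ u₂ => u₂ ∈ proxSet (fun w => ((η : ℝ) : EReal) * conjFn (iotaInd d) w)
      ((2 * η) • mVec D u₁ - η • mVec D v + y))
    (existsUnique_mem_proxSet_coe (h := fun w => β * g w) (hgconv.smul hβ.le) _)
    (fun _ => existsUnique_mem_proxSet_coe_mul_conjFn_iotaInd d hη _)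
end
end

section
/- Let r : ℝ^{m₁+m₂} → ℝ be convex and differentiable with L-Lipschitz gradient (e.g. r(v; y) = f(v) with ∇f L-Lipschitz), and assume λ_min(W) > L/2. Set α := L/(2λ_min(W)) ∈ (0,1). Then the operator Ñ := I − (1/α)W⁻¹∇r is nonexpansive with respect to W, and consequently I − W⁻¹∇r = (1−α)I + αÑ is α-averaged nonexpansive with respect to W. -/
noncomputable section

open scoped BigOperators

/-- `ℝ^{m₁+m₂}`, realized as the Euclidean space indexed by `Fin m₁ ⊕ Fin m₂`. -/
abbrev EucS (m₁ m₂ : ℕ) := EuclideanSpace ℝ (Fin m₁ ⊕ Fin m₂)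

/-- First block (first m₁ components) of a vector in `ℝ^{m₁+m₂}`. -/
def fstS {m₁ m₂ : ℕ} (z : EucS m₁ m₂) : Euc m₁ := WithLp.toLp 2 (fun i => z (Sum.inl i))

/-- Second block (last m₂ components) of a vector in `ℝ^{m₁+m₂}`. -/
def sndS {m₁ m₂ : ℕ} (z : EucS m₁ m₂) : Euc m₂ := WithLp.toLp 2 (fun j => z (Sum.inr j))

/-- Assemble a vector of `ℝ^{m₁+m₂}` from its two blocks. -/
def pairS {m₁ m₂ : ℕ} (a : Euc m₁) (b : Euc m₂) : EucS m₁ m₂ := WithLp.toLp 2 (Sum.elim a b)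

/-- The block matrix `W = [[(1/β)I, −Dᵀ],[−D, (1/η)I]]` acting on `ℝ^{m₁+m₂}`. -/
def WappS {m₁ m₂ : ℕ} (β η : ℝ) (D : Matrix (Fin m₂) (Fin m₁) ℝ)
    (z : EucS m₁ m₂) : EucS m₁ m₂ :=
  pairS ((1 / β) • fstS z - mVec D.transpose (sndS z))
    (-(mVec D (fstS z)) + (1 / η) • sndS z)

/-- The `W`-weighted norm `‖z‖_W = ⟨z, Wz⟩^{1/2}` on `ℝ^{m₁+m₂}`. -/
def normWS {m₁ m₂ : ℕ} (β η : ℝ) (D : Matrix (Fin m₂) (Fin m₁) ℝ)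
    (z : EucS m₁ m₂) : ℝ :=
  Real.sqrt (inner ℝ z (WappS β η D z) : ℝ)

/-!
`W` is symmetric with `⟪z, W z⟫ ≥ λ_min ‖z‖²`, and the gradient of a convex function with
`L`-Lipschitz gradient is `1/L`-cocoercive (Baillon–Haddad, from the descent lemma). With
`d = x - y`, `g = ∇r x - ∇r y` and `u = W⁻¹ g` one has
`‖d - s u‖²_W = ‖d‖²_W - 2 s ⟪g, d⟫ + s² ⟪u, g⟫` and `λ_min ⟪u, g⟫ ≤ ‖g‖² ≤ L ⟪g, d⟫`,
so the `W`-norm does not grow as long as `s L ≤ 2 λ_min`; `s = 1/α` is the extreme case.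
-/

open AffineMap Matrix
open scoped Gradient RealInnerProductSpace

section Gradient

variable {F : Type*} [NormedAddCommGroup F] [InnerProductSpace ℝ F] [CompleteSpace F]
  {f : F → ℝ} {L : ℝ}

theorem hasDerivAt_comp_lineMap {x y : F} {t : ℝ} (hf : DifferentiableAt ℝ f (lineMap x y t)) :
    HasDerivAt (f ∘ lineMap x y) ⟪∇ f (lineMap x y t), y - x⟫ t := by
  have := hf.hasGradientAt.hasFDerivAt.comp_hasDerivAt t (hasDerivAt_lineMap (a := x) (b := y))
  simpa [InnerProductSpace.toDual_apply_apply] using this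

theorem ConvexOn.add_inner_gradient_le (hf : ConvexOn ℝ Set.univ f) {x : F}
    (hx : DifferentiableAt ℝ f x) (y : F) : f x + ⟪∇ f x, y - x⟫ ≤ f y := by
  have hline := (hf.comp_affineMap (lineMap x y)).le_slope_of_hasDerivAt (Set.mem_univ 0)
    (Set.mem_univ 1) one_pos (hasDerivAt_comp_lineMap (by simpa using hx))
  simp only [Function.comp_apply, lineMap_apply_zero, lineMap_apply_one, slope_def_field,
    sub_zero, div_one] at hline
  linarith

theorem le_add_inner_gradient_add_sq_of_lipschitz (hf : Differentiable ℝ f)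
    (hlip : ∀ a b, ‖∇ f a - ∇ f b‖ ≤ L * ‖a - b‖) (x y : F) :
    f y ≤ f x + ⟪∇ f x, y - x⟫ + L / 2 * ‖y - x‖ ^ 2 := by
  set ψ : ℝ → ℝ := fun t ↦ f (lineMap x y t) - t * ⟪∇ f x, y - x⟫ - L / 2 * ‖y - x‖ ^ 2 * t ^ 2
  have hψ' : ∀ t, HasDerivAt ψ
      (⟪∇ f (lineMap x y t) - ∇ f x, y - x⟫ - L * ‖y - x‖ ^ 2 * t) t := fun t ↦ by
    have := ((hasDerivAt_comp_lineMap (x := x) (y := y) (hf _)).sub ((hasDerivAt_id t).mul_const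
      ⟪∇ f x, y - x⟫)).sub ((hasDerivAt_pow 2 t).const_mul (L / 2 * ‖y - x‖ ^ 2))
    exact this.congr_deriv (by rw [inner_sub_left]; norm_num; ring)
  have hanti : AntitoneOn ψ (Set.Icc 0 1) := by
    refine antitoneOn_of_hasDerivWithinAt_nonpos (convex_Icc 0 1)
      (fun t _ ↦ (hψ' t).continuousAt.continuousWithinAt) (fun t _ ↦ (hψ' t).hasDerivWithinAt)
      fun t ht ↦ ?_
    rw [interior_Icc] at ht
    have hgrad : ‖∇ f (lineMap x y t) - ∇ f x‖ ≤ L * (t * ‖y - x‖) := by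
      simpa [← dist_eq_norm, dist_lineMap_left, abs_of_pos ht.1, dist_comm x y] using
        hlip (lineMap x y t) x
    nlinarith [real_inner_le_norm (∇ f (lineMap x y t) - ∇ f x) (y - x), norm_nonneg (y - x)]
  have := hanti (Set.left_mem_Icc.2 zero_le_one) (Set.right_mem_Icc.2 zero_le_one) zero_le_one
  simp only [ψ, lineMap_apply_zero, lineMap_apply_one] at this
  linarith

theorem ConvexOn.add_inner_gradient_add_sq_norm_le (hf : ConvexOn ℝ Set.univ f)
    (hdiff : Differentiable ℝ f) (hL : 0 < L) (hlip : ∀ a b, ‖∇ f a - ∇ f b‖ ≤ L * ‖a - b‖)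
    (x y : F) : f x + ⟪∇ f x, y - x⟫ + ‖∇ f y - ∇ f x‖ ^ 2 / (2 * L) ≤ f y := by
  set g := ∇ f y - ∇ f x
  -- compare both ends with the gradient step `y - L⁻¹ • g` taken from `y`
  have h1 := hf.add_inner_gradient_le (hdiff x) (y - L⁻¹ • g)
  have h2 := le_add_inner_gradient_add_sq_of_lipschitz hdiff hlip y (y - L⁻¹ • g)
  rw [show y - L⁻¹ • g - x = (y - x) - L⁻¹ • g by abel, inner_sub_right,
    real_inner_smul_right] at h1
  rw [sub_sub_cancel_left, inner_neg_right, real_inner_smul_right, norm_neg, norm_smul, mul_pow,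
    Real.norm_eq_abs, sq_abs] at h2
  have hg : ⟪∇ f y, g⟫ - ⟪∇ f x, g⟫ = ‖g‖ ^ 2 := by
    rw [← inner_sub_left, real_inner_self_eq_norm_sq]
  have hsq : L / 2 * (L⁻¹ ^ 2 * ‖g‖ ^ 2) = ‖g‖ ^ 2 / (2 * L) := by field_simp
  linear_combination h1 + h2 - L⁻¹ * hg + hsq

theorem ConvexOn.sq_norm_gradient_sub_le_inner (hf : ConvexOn ℝ Set.univ f)
    (hdiff : Differentiable ℝ f) (hL : 0 < L) (hlip : ∀ a b, ‖∇ f a - ∇ f b‖ ≤ L * ‖a - b‖)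
    (x y : F) : ‖∇ f x - ∇ f y‖ ^ 2 ≤ L * ⟪∇ f x - ∇ f y, x - y⟫ := by
  have hxy := hf.add_inner_gradient_add_sq_norm_le hdiff hL hlip x y
  have hyx := hf.add_inner_gradient_add_sq_norm_le hdiff hL hlip y x
  rw [norm_sub_rev] at hxy
  have hsum : ‖∇ f x - ∇ f y‖ ^ 2 / L ≤ ⟪∇ f x - ∇ f y, x - y⟫ := by
    have h2L : ‖∇ f x - ∇ f y‖ ^ 2 / L = 2 * (‖∇ f x - ∇ f y‖ ^ 2 / (2 * L)) := by field_simp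
    simp only [inner_sub_left, inner_sub_right] at hxy hyx ⊢
    linarith
  exact (div_le_iff₀' hL).mp hsum

end Gradient

section SymmetricOperator

variable {E : Type*} [NormedAddCommGroup E] [InnerProductSpace ℝ E] {T : E →ₗ[ℝ] E} {c : ℝ}

theorem LinearMap.IsSymmetric.mul_sq_norm_le_inner_map_self [FiniteDimensional ℝ E]
    (hT : T.IsSymmetric) (hc : c ∈ lowerBounds {μ | ∃ z, z ≠ 0 ∧ T z = μ • z}) (z : E) :
    c * ‖z‖ ^ 2 ≤ ⟪z, T z⟫ := by
  have hμ : ∀ i, c ≤ hT.eigenvalues rfl i := fun i ↦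
    hc ⟨hT.eigenvectorBasis rfl i, (hT.eigenvectorBasis rfl).toBasis.ne_zero i,
      hT.apply_eigenvectorBasis rfl i⟩
  rw [← (hT.eigenvectorBasis rfl).repr.inner_map_map, ← (hT.eigenvectorBasis rfl).repr.norm_map,
    EuclideanSpace.norm_sq_eq, PiLp.inner_apply, Finset.mul_sum]
  refine Finset.sum_le_sum fun i _ ↦ ?_
  simp only [hT.eigenvectorBasis_apply_self_apply rfl, Real.norm_eq_abs, sq_abs,
    RCLike.inner_apply, conj_trivial, RCLike.ofReal_real_eq_id, id_eq]
  nlinarith [mul_le_mul_of_nonneg_right (hμ i) (sq_nonneg ((hT.eigenvectorBasis rfl).repr z i))]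

theorem mul_inner_le_sq_norm_of_apply_eq (hc : 0 < c) (hcoer : ∀ z, c * ‖z‖ ^ 2 ≤ ⟪z, T z⟫)
    {u g : E} (hu : T u = g) : c * ⟪u, g⟫ ≤ ‖g‖ ^ 2 := by
  have hug := hu ▸ hcoer u
  have hcs := real_inner_le_norm u g
  -- `c ‖u‖ ‖g‖ ≤ (c² ‖u‖² + ‖g‖²) / 2 ≤ (c ⟪u, g⟫ + ‖g‖²) / 2`
  nlinarith [sq_nonneg (c * ‖u‖ - ‖g‖), mul_le_mul_of_nonneg_left hug hc.le,
    mul_le_mul_of_nonneg_left hcs hc.le]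

theorem LinearMap.IsSymmetric.inner_sub_smul_map_sub_smul_le (hT : T.IsSymmetric) (hc : 0 < c)
    (hcoer : ∀ z, c * ‖z‖ ^ 2 ≤ ⟪z, T z⟫) {L : ℝ} (hL : 0 < L) {d g u : E}
    (hgd : ‖g‖ ^ 2 ≤ L * ⟪g, d⟫) (hu : T u = g) {s : ℝ} (hs : 0 ≤ s) (hsL : s * L ≤ 2 * c) :
    ⟪d - s • u, T (d - s • u)⟫ ≤ ⟪d, T d⟫ := by
  have hug := mul_inner_le_sq_norm_of_apply_eq hc hcoer hu
  have hgd_nonneg : 0 ≤ ⟪g, d⟫ := nonneg_of_mul_nonneg_right ((sq_nonneg _).trans hgd) hL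
  have hexpand : ⟪d - s • u, T (d - s • u)⟫ = ⟪d, T d⟫ - 2 * s * ⟪g, d⟫ + s ^ 2 * ⟪u, g⟫ := by
    rw [map_sub, map_smul, hu]
    simp only [inner_sub_left, inner_sub_right, real_inner_smul_left, real_inner_smul_right]
    rw [← hT u d, hu, real_inner_comm d g]
    ring
  have hquad : c * (s ^ 2 * ⟪u, g⟫) ≤ c * (2 * s * ⟪g, d⟫) := by
    nlinarith [mul_le_mul_of_nonneg_left (hug.trans hgd) (sq_nonneg s),
      mul_le_mul_of_nonneg_right hsL (mul_nonneg hs hgd_nonneg)]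
  rw [hexpand]
  linarith [le_of_mul_le_mul_left hquad hc]

end SymmetricOperator

def blockW {m₁ m₂ : ℕ} (β η : ℝ) (D : Matrix (Fin m₂) (Fin m₁) ℝ) :
    Matrix (Fin m₁ ⊕ Fin m₂) (Fin m₁ ⊕ Fin m₂) ℝ :=
  fromBlocks ((1 / β) • 1) (-Dᵀ) (-D) ((1 / η) • 1)

theorem isHermitian_blockW {m₁ m₂ : ℕ} (β η : ℝ) (D : Matrix (Fin m₂) (Fin m₁) ℝ) :
    (blockW β η D).IsHermitian :=
  IsHermitian.fromBlocks (by simp [IsHermitian]) (by simp) (by simp [IsHermitian])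

theorem coe_toEuclideanLin_blockW {m₁ m₂ : ℕ} (β η : ℝ) (D : Matrix (Fin m₂) (Fin m₁) ℝ) :
    ⇑(toEuclideanLin (blockW β η D)) = WappS β η D := by
  ext z (i | j) <;>
    simp [blockW, WappS, pairS, fstS, sndS, mVec, toLpLin_apply, fromBlocks_mulVec, one_apply,
      mulVec, dotProduct, sub_eq_add_neg]

theorem stmt13_general {m₁ m₂ : ℕ} (D : Matrix (Fin m₂) (Fin m₁) ℝ)
    (β η : ℝ)
    (r : EucS m₁ m₂ → ℝ) (L : ℝ) (hL : 0 < L)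
    (hrdiff : Differentiable ℝ r) (hrconv : ConvexOn ℝ Set.univ r)
    (hrlip : ∀ x y : EucS m₁ m₂, ‖gradient r x - gradient r y‖ ≤ L * ‖x - y‖)
    (lammin : ℝ)
    (hlam : IsLeast {μ : ℝ | ∃ z : EucS m₁ m₂, z ≠ 0 ∧ WappS β η D z = μ • z} lammin)
    (hgt : L / 2 < lammin)
    (α : ℝ) (hα : α = L / (2 * lammin))
    (Winv : EucS m₁ m₂ → EucS m₁ m₂)
    (hWinv₁ : ∀ z, WappS β η D (Winv z) = z) :
    (0 < α ∧ α < 1) ∧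
    (∀ x y : EucS m₁ m₂,
      normWS β η D ((x - (1 / α) • Winv (gradient r x)) -
          (y - (1 / α) • Winv (gradient r y))) ≤ normWS β η D (x - y)) ∧
    (∀ z : EucS m₁ m₂,
      z - Winv (gradient r z) =
        (1 - α) • z + α • (z - (1 / α) • Winv (gradient r z))) ∧
    ∃ N : EucS m₁ m₂ → EucS m₁ m₂,
      (∀ x y : EucS m₁ m₂, normWS β η D (N x - N y) ≤ normWS β η D (x - y)) ∧
      ∀ z : EucS m₁ m₂, z - Winv (gradient r z) = (1 - α) • z + α • N z := by
  have hlam_pos : 0 < lammin := by linarith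
  have hα_pos : 0 < α := by rw [hα]; positivity
  have hα_lt : α < 1 := by rw [hα, div_lt_one (by positivity)]; linarith
  set T := toEuclideanLin (blockW β η D)
  have hTW : ⇑T = WappS β η D := coe_toEuclideanLin_blockW β η D
  have hT : T.IsSymmetric := isSymmetric_toEuclideanLin_iff.mpr (isHermitian_blockW β η D)
  have hcoer := hT.mul_sq_norm_le_inner_map_self (hTW ▸ hlam.2)
  have hnonexp : ∀ x y : EucS m₁ m₂,
      normWS β η D ((x - (1 / α) • Winv (∇ r x)) - (y - (1 / α) • Winv (∇ r y))) ≤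
        normWS β η D (x - y) := by
    intro x y
    have hu : T (Winv (∇ r x) - Winv (∇ r y)) = ∇ r x - ∇ r y := by
      rw [map_sub, hTW, hWinv₁, hWinv₁]
    have hsL : 1 / α * L = 2 * lammin := by rw [hα]; field_simp
    have hle := hT.inner_sub_smul_map_sub_smul_le hlam_pos hcoer hL
      (hrconv.sq_norm_gradient_sub_le_inner hrdiff hL hrlip x y) hu (by positivity) hsL.le
    rw [sub_sub_sub_comm, ← smul_sub]
    simpa only [normWS, ← hTW] using Real.sqrt_le_sqrt hle
  have hsplit : ∀ z : EucS m₁ m₂, z - Winv (∇ r z) =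
      (1 - α) • z + α • (z - (1 / α) • Winv (∇ r z)) := fun z ↦ by
    rw [smul_sub, smul_smul, mul_one_div_cancel hα_pos.ne', one_smul, sub_smul, one_smul]
    abel
  exact ⟨⟨hα_pos, hα_lt⟩, hnonexp, hsplit, _, hnonexp, hsplit⟩

/-- let r : ℝ^{m₁+m₂} → ℝ be convex, differentiable with L-Lipschitz
gradient, and assume λ_min(W) > L/2.  With α = L/(2λ_min(W)) ∈ (0,1), the operator
Ñ = I − (1/α)W⁻¹∇r is nonexpansive with respect to W, and consequently
I − W⁻¹∇r = (1−α)I + αÑ is α-averaged nonexpansive with respect to W. -/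
theorem stmt13 {m₁ m₂ : ℕ} (D : Matrix (Fin m₂) (Fin m₁) ℝ)
    (β η : ℝ) (hβ : 0 < β) (hη : 0 < η)
    (r : EucS m₁ m₂ → ℝ) (L : ℝ) (hL : 0 < L)
    (hrdiff : Differentiable ℝ r) (hrconv : ConvexOn ℝ Set.univ r)
    (hrlip : ∀ x y : EucS m₁ m₂, ‖gradient r x - gradient r y‖ ≤ L * ‖x - y‖)
    (lammin : ℝ)
    (hlam : IsLeast {μ : ℝ | ∃ z : EucS m₁ m₂, z ≠ 0 ∧ WappS β η D z = μ • z} lammin)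
    (hgt : L / 2 < lammin)
    (α : ℝ) (hα : α = L / (2 * lammin))
    (Winv : EucS m₁ m₂ → EucS m₁ m₂)
    (hWinv₁ : ∀ z, WappS β η D (Winv z) = z)
    (hWinv₂ : ∀ z, Winv (WappS β η D z) = z) :
    (0 < α ∧ α < 1) ∧
    (∀ x y : EucS m₁ m₂,
      normWS β η D ((x - (1 / α) • Winv (gradient r x)) -
          (y - (1 / α) • Winv (gradient r y))) ≤ normWS β η D (x - y)) ∧
    (∀ z : EucS m₁ m₂,
      z - Winv (gradient r z) =
        (1 - α) • z + α • (z - (1 / α) • Winv (gradient r z))) ∧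
    ∃ N : EucS m₁ m₂ → EucS m₁ m₂,
      (∀ x y : EucS m₁ m₂, normWS β η D (N x - N y) ≤ normWS β η D (x - y)) ∧
      ∀ z : EucS m₁ m₂, z - Winv (gradient r z) = (1 - α) • z + α • N z :=
  stmt13_general D β η r L hL hrdiff hrconv hrlip lammin hlam hgt α hα Winv hWinv₁
end
end

section
/- Consider the MPAERL model with τ > 0: minimize (1/T)‖R̃v‖₂² + τ‖Ĩv‖₁ over {v ∈ ℝ^{m₁} : Dv ≥ d componentwise}. If the feasible set {v : Dv ≥ d} is nonempty, then the objective is proper, lower semicontinuous, convex and coercive on the (closed convex) feasible set, and the model attains a minimizer. -/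
noncomputable section

open scoped BigOperators

/-- Matrix–vector multiplication for a general (finite) row index type. -/
def mVecG {I : Type} {q : ℕ} (A : I → Fin q → ℝ) (v : Euc q) : I → ℝ :=
  fun i => ∑ j, A i j * v j

/-!
On the feasible polyhedron the rows `B v ≥ c` pin the last coordinate into `[ρ₁, ρ₂]`, so the
`ℓ¹` penalty `τ‖Ĩv‖₁` controls `‖v‖₂` up to the constant `max |ρ₁| |ρ₂|`. This linear lower bound
makes the continuous convex objective coercive on the closed feasible set, and a coercive
continuous function on a nonempty closed subset of a finite-dimensional space attains its minimum.
-/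

open Set Filter

section Polyhedron

variable {I : Type} {q : ℕ}

lemma isLinearMap_mVecG_apply (D : I → Fin q → ℝ) (i : I) :
    IsLinearMap ℝ fun v : Euc q => mVecG D v i where
  map_add x y := by simp only [mVecG, PiLp.add_apply, mul_add, Finset.sum_add_distrib]
  map_smul c x := by
    simp only [mVecG, PiLp.smul_apply, smul_eq_mul, Finset.mul_sum, mul_left_comm]

lemma continuous_mVecG_apply (D : I → Fin q → ℝ) (i : I) :
    Continuous fun v : Euc q => mVecG D v i :=
  (IsLinearMap.mk' _ (isLinearMap_mVecG_apply D i)).continuous_of_finiteDimensional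

lemma isClosed_setOf_forall_le_mVecG (D : I → Fin q → ℝ) (d : I → ℝ) :
    IsClosed {v : Euc q | ∀ i, d i ≤ mVecG D v i} := by
  rw [ofPred_forall]
  exact isClosed_iInter fun i => isClosed_le continuous_const (continuous_mVecG_apply D i)

lemma convex_setOf_forall_le_mVecG (D : I → Fin q → ℝ) (d : I → ℝ) :
    Convex ℝ {v : Euc q | ∀ i, d i ≤ mVecG D v i} := by
  rw [ofPred_forall]
  exact convex_iInter fun i => convex_halfSpace_ge (isLinearMap_mVecG_apply D i) (d i)

end Polyhedron

section Coercive

variable {E : Type*} [NormedAddCommGroup E] {s : Set E} {f : E → ℝ}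

lemma coercive_of_le_mul_norm_sub {τ ρ : ℝ} (hτ : 0 < τ) (h : ∀ v ∈ s, τ * (‖v‖ - ρ) ≤ f v) :
    ∀ c : ℝ, ∃ M : ℝ, ∀ v ∈ s, M ≤ ‖v‖ → c ≤ f v := fun c =>
  ⟨ρ + c / τ, fun v hv hM =>
    calc c = τ * (c / τ) := by field_simp
      _ ≤ τ * (‖v‖ - ρ) := by gcongr; linarith
      _ ≤ f v := h v hv⟩

lemma ContinuousOn.exists_isMinOn_of_coercive [ProperSpace E] (hf : ContinuousOn f s)
    (hs : IsClosed s) (hne : s.Nonempty) (hcoer : ∀ c : ℝ, ∃ M : ℝ, ∀ v ∈ s, M ≤ ‖v‖ → c ≤ f v) :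
    ∃ x ∈ s, IsMinOn f s x := by
  obtain ⟨x₀, hx₀⟩ := hne
  obtain ⟨M, hM⟩ := hcoer (f x₀)
  refine hf.exists_isMinOn' hs hx₀ ?_
  filter_upwards [(tendsto_norm_cocompact_atTop.eventually_ge_atTop M).filter_mono inf_le_left,
    mem_inf_of_right (mem_principal_self s)] with v hMv hv using hM v hv hMv

end Coercive

lemma convexOn_finset_sum {ι E : Type*} [AddCommGroup E] [Module ℝ E] {s : Set E}
    (hs : Convex ℝ s) (t : Finset ι) {f : ι → E → ℝ} (hf : ∀ i ∈ t, ConvexOn ℝ s (f i)) :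
    ConvexOn ℝ s fun x => ∑ i ∈ t, f i x := by
  rw [← Finset.sum_fn]
  exact Finset.sum_induction f (ConvexOn ℝ s) (fun _ _ => ConvexOn.add) (convexOn_const 0 hs) hf

lemma EuclideanSpace.norm_le_sum_abs {n : ℕ} (v : Euc n) : ‖v‖ ≤ ∑ j, |v j| :=
  calc ‖v‖ = √(∑ j, |v j| ^ 2) := by simp only [EuclideanSpace.norm_eq, Real.norm_eq_abs]
    _ ≤ √((∑ j, |v j|) ^ 2) :=
      Real.sqrt_le_sqrt (Finset.sum_sq_le_sq_sum_of_nonneg fun j _ => abs_nonneg (v j))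
    _ = ∑ j, |v j| := Real.sqrt_sq (Finset.sum_nonneg fun j _ => abs_nonneg (v j))

lemma mVec_eq_toLpLin {p q : ℕ} (A : Matrix (Fin p) (Fin q) ℝ) :
    mVec A = Matrix.toLpLin 2 2 A :=
  rfl

section Objective

variable {T N : ℕ} (Rt : Matrix (Fin T) (Fin (N + 1)) ℝ)

def mpaerlObjective (τ : ℝ) (v : Euc (N + 1)) : ℝ :=
  (1 / (T : ℝ)) * ‖mVec Rt v‖ ^ 2 + τ * ∑ i : Fin N, |v (Fin.castSucc i)|

lemma continuous_mpaerlObjective (τ : ℝ) : Continuous (mpaerlObjective Rt τ) := by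
  unfold mpaerlObjective
  rw [mVec_eq_toLpLin]
  have hRt := (Matrix.toLpLin 2 2 Rt).continuous_of_finiteDimensional
  fun_prop

lemma convexOn_mpaerlObjective {τ : ℝ} (hτ : 0 ≤ τ) :
    ConvexOn ℝ univ (mpaerlObjective Rt τ) := by
  unfold mpaerlObjective
  rw [mVec_eq_toLpLin]
  have hsq : ConvexOn ℝ univ fun v => ‖Matrix.toLpLin 2 2 Rt v‖ ^ 2 :=
    (convexOn_univ_norm.pow (fun _ _ => norm_nonneg _) 2).comp_linearMap _
  have hℓ1 : ConvexOn ℝ univ fun v : Euc (N + 1) => ∑ i : Fin N, |v (Fin.castSucc i)| :=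
    convexOn_finset_sum convex_univ _ fun i _ =>
      convexOn_univ_norm.comp_linearMap
        (EuclideanSpace.proj (𝕜 := ℝ) (Fin.castSucc i)).toLinearMap
  exact (hsq.smul (by positivity)).add (hℓ1.smul hτ)

lemma mul_norm_sub_abs_last_le_mpaerlObjective {τ : ℝ} (hτ : 0 ≤ τ) (v : Euc (N + 1)) :
    τ * (‖v‖ - |v (Fin.last N)|) ≤ mpaerlObjective Rt τ v := by
  have hnorm : ‖v‖ - |v (Fin.last N)| ≤ ∑ i : Fin N, |v (Fin.castSucc i)| := by
    have := EuclideanSpace.norm_le_sum_abs v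
    rw [Fin.sum_univ_castSucc] at this
    linarith
  calc τ * (‖v‖ - |v (Fin.last N)|) ≤ τ * ∑ i : Fin N, |v (Fin.castSucc i)| := by gcongr
    _ ≤ mpaerlObjective Rt τ v := le_add_of_nonneg_left (by positivity)

end Objective

lemma sum_mul_eq_of_lastColumn {N : ℕ} {B : Matrix (Fin 2) (Fin (N + 1)) ℝ}
    (hB : ∀ i j, B i j = if (j : ℕ) = N then (if i = 0 then 1 else -1) else 0)
    (i : Fin 2) (v : Euc (N + 1)) :
    ∑ j, B i j * v j = (if i = 0 then 1 else -1) * v (Fin.last N) := by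
  simp [Fin.sum_univ_castSucc, hB, Nat.ne_of_lt]

lemma last_mem_Icc_of_forall_le_mVecG {N : ℕ} {A B : Matrix (Fin 2) (Fin (N + 1)) ℝ}
    {b : Fin 2 → ℝ} {ρ₁ ρ₂ : ℝ}
    (hB : ∀ i j, B i j = if (j : ℕ) = N then (if i = 0 then 1 else -1) else 0)
    {v : Euc (N + 1)}
    (hv : ∀ i, Sum.elim b (Sum.elim (-b) ![ρ₁, -ρ₂]) i ≤
      mVecG (Sum.elim A (Sum.elim (-A) B)) v i) :
    v (Fin.last N) ∈ Icc ρ₁ ρ₂ := by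
  have h₀ : ρ₁ ≤ ∑ j, B 0 j * v j := hv (Sum.inr (Sum.inr 0))
  have h₁ : -ρ₂ ≤ ∑ j, B 1 j * v j := hv (Sum.inr (Sum.inr 1))
  rw [sum_mul_eq_of_lastColumn hB] at h₀ h₁
  norm_num at h₀ h₁
  exact ⟨h₀, by linarith⟩

theorem stmt15_general (T N : ℕ) (τ : ℝ) (hτ : 0 < τ) (ρ₁ ρ₂ : ℝ)
    (Rt : Matrix (Fin T) (Fin (N + 1)) ℝ) (A : Matrix (Fin 2) (Fin (N + 1)) ℝ) (b : Fin 2 → ℝ)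
    (B : Matrix (Fin 2) (Fin (N + 1)) ℝ)
    (hB : ∀ i j, B i j = if (j : ℕ) = N then (if i = 0 then 1 else -1) else 0)
    (c : Fin 2 → ℝ) (hc : c = ![ρ₁, -ρ₂])
    (D : (Fin 2 ⊕ Fin 2 ⊕ Fin 2) → Fin (N + 1) → ℝ)
    (hD : D = Sum.elim A (Sum.elim (-A) B))
    (d : (Fin 2 ⊕ Fin 2 ⊕ Fin 2) → ℝ)
    (hd : d = Sum.elim b (Sum.elim (-b) c))
    (obj : Euc (N + 1) → ℝ)
    (hobj : ∀ v, obj v =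
      (1 / (T : ℝ)) * ‖mVec Rt v‖ ^ 2 + τ * ∑ i : Fin N, |v (Fin.castSucc i)|)
    (feas : Set (Euc (N + 1)))
    (hfeas : feas = {v : Euc (N + 1) | ∀ i, d i ≤ mVecG D v i})
    (hne : feas.Nonempty) :
    IsClosed feas ∧ Convex ℝ feas ∧
    LowerSemicontinuousOn obj feas ∧ ConvexOn ℝ feas obj ∧
    (∀ cc : ℝ, ∃ M : ℝ, ∀ v ∈ feas, M ≤ ‖v‖ → cc ≤ obj v) ∧
    ∃ vmin ∈ feas, ∀ v ∈ feas, obj vmin ≤ obj v := by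
  obtain rfl : obj = mpaerlObjective Rt τ := funext hobj
  subst hD hd hc
  have hclosed : IsClosed feas := hfeas ▸ isClosed_setOf_forall_le_mVecG _ _
  have hconvex : Convex ℝ feas := hfeas ▸ convex_setOf_forall_le_mVecG _ _
  have hcont := continuous_mpaerlObjective Rt τ
  have hbound : ∀ v ∈ feas, τ * (‖v‖ - max |ρ₁| |ρ₂|) ≤ mpaerlObjective Rt τ v := by
    intro v hv
    rw [hfeas] at hv
    obtain ⟨hlo, hhi⟩ := last_mem_Icc_of_forall_le_mVecG hB hv
    calc τ * (‖v‖ - max |ρ₁| |ρ₂|) ≤ τ * (‖v‖ - |v (Fin.last N)|) := by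
          gcongr; exact abs_le_max_abs_abs hlo hhi
      _ ≤ mpaerlObjective Rt τ v := mul_norm_sub_abs_last_le_mpaerlObjective Rt hτ.le v
  have hcoer := coercive_of_le_mul_norm_sub hτ hbound
  obtain ⟨vmin, hvmin, hmin⟩ := hcont.continuousOn.exists_isMinOn_of_coercive hclosed hne hcoer
  exact ⟨hclosed, hconvex, hcont.lowerSemicontinuous.lowerSemicontinuousOn _,
    (convexOn_mpaerlObjective Rt hτ.le).subset (subset_univ _) hconvex, hcoer, vmin, hvmin, hmin⟩

/-- the MPAERL model with τ > 0.  With R̃ = (R, −1_T), Ĩ deleting the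
last coordinate, μ̂ = (1/T)Rᵀ1_T, A = [[μ̂ᵀ, −1],[1ᵀ, 0]], b = (0,1)ᵀ,
B = [[0ᵀ, 1],[0ᵀ, −1]], c = (ρ₁, −ρ₂)ᵀ, D = [A; −A; B] and d = (b; −b; c), if the
feasible set {v | Dv ≥ d} is nonempty then the objective
v ↦ (1/T)‖R̃v‖² + τ‖Ĩv‖₁ is lower semicontinuous, convex and coercive on the
closed convex feasible set, and the model attains a minimizer. -/
theorem stmt15 (T N : ℕ) (hT : 0 < T) (hN : 0 < N)
    (R : Matrix (Fin T) (Fin N) ℝ) (τ : ℝ) (hτ : 0 < τ)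
    (ρ₁ ρ₂ : ℝ) (hρ₁ : 0 < ρ₁) (hρ₁₂ : ρ₁ ≤ ρ₂)
    (Rt : Matrix (Fin T) (Fin (N + 1)) ℝ)
    (hRt : ∀ t j, Rt t j = if h : (j : ℕ) < N then R t ⟨j, h⟩ else -1)
    (μ : Fin N → ℝ) (hμ : ∀ j, μ j = (1 / (T : ℝ)) * ∑ t, R t j)
    (A : Matrix (Fin 2) (Fin (N + 1)) ℝ)
    (hA : ∀ j, (A 0 j = if h : (j : ℕ) < N then μ ⟨j, h⟩ else -1) ∧
               (A 1 j = if (j : ℕ) < N then 1 else 0))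
    (b : Fin 2 → ℝ) (hb : b = ![0, 1])
    (B : Matrix (Fin 2) (Fin (N + 1)) ℝ)
    (hB : ∀ i j, B i j = if (j : ℕ) = N then (if i = 0 then 1 else -1) else 0)
    (c : Fin 2 → ℝ) (hc : c = ![ρ₁, -ρ₂])
    (D : (Fin 2 ⊕ Fin 2 ⊕ Fin 2) → Fin (N + 1) → ℝ)
    (hD : D = Sum.elim A (Sum.elim (-A) B))
    (d : (Fin 2 ⊕ Fin 2 ⊕ Fin 2) → ℝ)
    (hd : d = Sum.elim b (Sum.elim (-b) c))
    (obj : Euc (N + 1) → ℝ)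
    (hobj : ∀ v, obj v =
      (1 / (T : ℝ)) * ‖mVec Rt v‖ ^ 2 + τ * ∑ i : Fin N, |v (Fin.castSucc i)|)
    (feas : Set (Euc (N + 1)))
    (hfeas : feas = {v : Euc (N + 1) | ∀ i, d i ≤ mVecG D v i})
    (hne : feas.Nonempty) :
    IsClosed feas ∧ Convex ℝ feas ∧
    LowerSemicontinuousOn obj feas ∧ ConvexOn ℝ feas obj ∧
    (∀ cc : ℝ, ∃ M : ℝ, ∀ v ∈ feas, M ≤ ‖v‖ → cc ≤ obj v) ∧
    ∃ vmin ∈ feas, ∀ v ∈ feas, obj vmin ≤ obj v :=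
  stmt15_general T N τ hτ ρ₁ ρ₂ Rt A b B hB c hc D hD d hd obj hobj feas hfeas hne
end
end
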